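/- arXiv:2511.02725 — 9 statements merged into one kernel-verified Lean document; each statement's English description precedes it below -/
import Mathlib

section
/- Let ℓ = (ℓ_i^-, ℓ_i^+)_{i∈[n]} be an n-admissible localization vector, i.e., ℓ_i^± ≥ 0 and for all j < k: j - ℓ_j^- ≤ k - ℓ_k^- and j + ℓ_j^+ ≤ k + ℓ_k^+. Suppose σ ∈ S_n is ℓ-localized, meaning σ^{-1}(k) - k ∈ [-ℓ_k^-, ℓ_k^+] for all k. If σ has particles i > j at adjacent positions v and v+1 respectively (i.e., σ(v) = i, σ(v+1) = j, so they are out of order), then the permutation σ' obtained by swapping them is also ℓ-localized. -/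
open Finset

/-- `σ` is `ℓ`-localized: the position `σ⁻¹(k)` of each particle `k` satisfies
`σ⁻¹(k) - k ∈ [-ℓ⁻_k, ℓ⁺_k]`. -/
def IsLocalized (n : ℕ) (ℓm ℓp : Fin n → ℝ) (σ : Equiv.Perm (Fin n)) : Prop :=
  ∀ k : Fin n, -(ℓm k) ≤ ((σ.symm k : ℕ) : ℝ) - ((k : ℕ) : ℝ) ∧
    ((σ.symm k : ℕ) : ℝ) - ((k : ℕ) : ℝ) ≤ ℓp k

/-- `ℓ` is an `n`-admissible localization vector: entries are nonnegative and
for `j < k`, `j - ℓ⁻_j ≤ k - ℓ⁻_k` and `j + ℓ⁺_j ≤ k + ℓ⁺_k`. -/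
def IsAdmissible (n : ℕ) (ℓm ℓp : Fin n → ℝ) : Prop :=
  (∀ k : Fin n, 0 ≤ ℓm k ∧ 0 ≤ ℓp k) ∧
  ∀ j k : Fin n, j < k →
    ((j : ℕ) : ℝ) - ℓm j ≤ ((k : ℕ) : ℝ) - ℓm k ∧
    ((j : ℕ) : ℝ) + ℓp j ≤ ((k : ℕ) : ℝ) + ℓp k

/-- if `σ` is `ℓ`-localized for an `n`-admissible `ℓ`, and the particles
at adjacent positions `v, v+1` are out of order (`σ(v) = i > j = σ(v+1)`), then the
permutation obtained by swapping them is also `ℓ`-localized. -/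
theorem stmt2 (n : ℕ) (ℓm ℓp : Fin n → ℝ)
    (hadm : IsAdmissible n ℓm ℓp)
    (σ : Equiv.Perm (Fin n)) (hloc : IsLocalized n ℓm ℓp σ)
    (v v' : Fin n) (hv : (v' : ℕ) = (v : ℕ) + 1)
    (i j : Fin n) (hσv : σ v = i) (hσv' : σ v' = j) (hij : j < i) :
    IsLocalized n ℓm ℓp ((Equiv.swap v v').trans σ) := by
  intro k
  have hsymm : ((Equiv.swap v v').trans σ).symm k = Equiv.swap v v' (σ.symm k) := by
    simp [Equiv.symm_trans_apply]
  obtain ⟨hnn, hmono⟩ := hadm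
  have hvi : σ.symm i = v := by rw [← hσv]; simp
  have hvj : σ.symm j = v' := by rw [← hσv']; simp
  have hki := hloc i
  have hkj := hloc j
  rw [hvi] at hki
  rw [hvj] at hkj
  rw [hv] at hkj
  push_cast at hkj
  have hmij := hmono j i hij
  by_cases h1 : σ.symm k = v
  · have hk : k = i := by
      have := congrArg σ h1; simpa [hσv] using this
    subst hk
    rw [hsymm, h1, Equiv.swap_apply_left, hv]
    push_cast
    constructor
    · linarith [hki.1]
    · linarith [hkj.2, hmij.2]
  · by_cases h2 : σ.symm k = v'
    · have hk : k = j := by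
        have := congrArg σ h2; simpa [hσv'] using this
      subst hk
      rw [hsymm, h2, Equiv.swap_apply_right]
      constructor
      · linarith [hki.1, hmij.1]
      · linarith [hkj.2]
    · rw [hsymm, Equiv.swap_apply_of_ne_of_ne h1 h2]
      exact hloc k
end

section
/- More generally, let ℓ be an n-admissible localization vector, let σ ∈ S_n be ℓ-localized, and suppose σ(u) = i, σ(w) = j with u < w and i > j (two particles out of order, not necessarily adjacent). Then the permutation obtained from σ by exchanging the particles at positions u and w is also ℓ-localized. -/
open Finset

/-- if `σ` is `ℓ`-localized for an `n`-admissible `ℓ`, and `σ(u) = i`,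
`σ(w) = j` with positions `u < w` and particles `i > j` (out of order, not
necessarily adjacent), then exchanging the particles at positions `u` and `w`
yields a permutation that is still `ℓ`-localized. -/
theorem stmt3 (n : ℕ) (ℓm ℓp : Fin n → ℝ)
    (hadm : IsAdmissible n ℓm ℓp)
    (σ : Equiv.Perm (Fin n)) (hloc : IsLocalized n ℓm ℓp σ)
    (u w : Fin n) (huw : u < w)
    (i j : Fin n) (hσu : σ u = i) (hσw : σ w = j) (hij : j < i) :
    IsLocalized n ℓm ℓp ((Equiv.swap u w).trans σ) := by
  have hsu : σ.symm i = u := by rw [← hσu]; simp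
  have hsw : σ.symm j = w := by rw [← hσw]; simp
  have huw' : ((u : ℕ) : ℝ) ≤ ((w : ℕ) : ℝ) := by exact_mod_cast huw.le
  obtain ⟨hli1, hli2⟩ := hloc i
  obtain ⟨hlj1, hlj2⟩ := hloc j
  rw [hsu] at hli1 hli2
  rw [hsw] at hlj1 hlj2
  obtain ⟨hadm1, hadm2⟩ := hadm.2 j i hij
  intro k
  have hsymm : ((Equiv.swap u w).trans σ).symm k = Equiv.swap u w (σ.symm k) := by
    simp [Equiv.symm_trans_apply]
  by_cases hki : k = i
  · subst hki
    rw [hsymm, hsu, Equiv.swap_apply_left]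
    constructor
    · linarith
    · linarith
  · by_cases hkj : k = j
    · subst hkj
      rw [hsymm, hsw, Equiv.swap_apply_right]
      constructor
      · linarith
      · linarith
    · have h1 : σ.symm k ≠ u := fun h => hki (by rw [← hσu, ← h]; simp)
      have h2 : σ.symm k ≠ w := fun h => hkj (by rw [← hσw, ← h]; simp)
      rw [hsymm, Equiv.swap_apply_of_ne_of_ne h1 h2]
      exact hloc k
end

section
/- Let μ be the ε-positively biased permutation measure on S_n and let ℓ be an n-admissible localization vector. For every k ≥ 1, μ(σ(1) ∉ {1,…,k} | σ is ℓ-localized) ≤ 1/(1+ε)^k. Consequently, the law of the particle label at position 1 under μ(· | ℓ-loc) is stochastically dominated by a geometric random variable with success probability ε/(1+ε). -/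
open Finset
open scoped Classical

/-- The unnormalized weight `∏_{i<j} p(σ(i), σ(j))` of a permutation. -/
noncomputable def pairWeight (n : ℕ) (p : Fin n → Fin n → ℝ) (σ : Equiv.Perm (Fin n)) : ℝ :=
  ∏ x ∈ Finset.univ.filter (fun x : Fin n × Fin n => x.1 < x.2), p (σ x.1) (σ x.2)

/-! ### Auxiliary machinery -/

/-- Position `m` holds a "small" value (a value `< k`). -/
def smallP (n k : ℕ) (σ : Equiv.Perm (Fin n)) (m : ℕ) : Prop :=
  ∃ h : m < n, (σ ⟨m, h⟩ : ℕ) < k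

lemma smallP_iff {n k : ℕ} {σ : Equiv.Perm (Fin n)} (i : Fin n) :
    smallP n k σ i.val ↔ (σ i : ℕ) < k := by
  constructor
  · rintro ⟨h, hs⟩
    simpa [Fin.eta] using hs
  · intro h
    exact ⟨i.isLt, by simpa [Fin.eta] using h⟩

lemma small_pos {n k : ℕ} {σ : Equiv.Perm (Fin n)} (h0 : ¬ smallP n k σ 0)
    {m : ℕ} (hm : smallP n k σ m) : 1 ≤ m := by
  rcases Nat.eq_zero_or_pos m with h | h
  · subst h; exact absurd hm h0
  · exact h

/-- Length of the run of consecutive small positions starting right after `i`. -/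
noncomputable def runlen (n k : ℕ) (σ : Equiv.Perm (Fin n)) (i : ℕ) : ℕ :=
  Nat.findGreatest (fun t => ∀ l, 1 ≤ l → l ≤ t → smallP n k σ (i + l)) n

lemma runlen_spec1 (n k : ℕ) (σ : Equiv.Perm (Fin n)) (i : ℕ) :
    ∀ l, 1 ≤ l → l ≤ runlen n k σ i → smallP n k σ (i + l) :=
  Nat.findGreatest_spec (P := fun t => ∀ l, 1 ≤ l → l ≤ t → smallP n k σ (i + l))
    (Nat.zero_le n) (fun l h1 h2 => absurd (le_trans h1 h2) (by norm_num))

lemma runlen_add_lt (n k : ℕ) (σ : Equiv.Perm (Fin n)) (i : ℕ) (hi : i < n) :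
    i + runlen n k σ i < n := by
  rcases Nat.eq_zero_or_pos (runlen n k σ i) with h | h
  · simpa [h] using hi
  · obtain ⟨h2, _⟩ := runlen_spec1 n k σ i _ h le_rfl
    exact h2

lemma runlen_last (n k : ℕ) (σ : Equiv.Perm (Fin n)) (i : ℕ) (hn : 0 < n) :
    ¬ smallP n k σ (i + runlen n k σ i + 1) := by
  intro hsm
  by_cases hb : runlen n k σ i + 1 ≤ n
  · have hgr := Nat.findGreatest_is_greatest
      (P := fun t => ∀ l, 1 ≤ l → l ≤ t → smallP n k σ (i + l))
      (k := runlen n k σ i + 1) (lt_add_one _) hb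
    apply hgr
    intro l h1 h2
    rcases Nat.lt_or_ge l (runlen n k σ i + 1) with h3 | h3
    · exact runlen_spec1 n k σ i l h1 (by omega)
    · have : l = runlen n k σ i + 1 := by omega
      subst this
      simpa [← Nat.add_assoc] using hsm
  · have hr : runlen n k σ i = n := le_antisymm (Nat.findGreatest_le n) (by omega)
    obtain ⟨h2, _⟩ := runlen_spec1 n k σ i n hn (by omega)
    omega

/-- The position map: small positions shift one to the left, a non-small position jumps
to the end of the run of small positions following it. -/
noncomputable def piF (n k : ℕ) (σ : Equiv.Perm (Fin n)) : Fin n → Fin n := fun i =>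
  if (σ i : ℕ) < k then ⟨i.val - 1, Nat.lt_of_le_of_lt (Nat.sub_le i.val 1) i.isLt⟩
  else ⟨i.val + runlen n k σ i.val, runlen_add_lt n k σ i.val i.isLt⟩

lemma piF_small {n k : ℕ} {σ : Equiv.Perm (Fin n)} {i : Fin n} (h : (σ i : ℕ) < k) :
    (piF n k σ i).val = i.val - 1 := by simp [piF, h]

lemma piF_big {n k : ℕ} {σ : Equiv.Perm (Fin n)} {i : Fin n} (h : ¬ (σ i : ℕ) < k) :
    (piF n k σ i).val = i.val + runlen n k σ i.val := by simp [piF, h]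

lemma piF_inj {n k : ℕ} {σ : Equiv.Perm (Fin n)} (h0 : ¬ smallP n k σ 0) :
    Function.Injective (piF n k σ) := by
  intro i j hij
  have hn : 0 < n := i.pos
  have hij' : (piF n k σ i).val = (piF n k σ j).val := congrArg Fin.val hij
  by_cases hi : (σ i : ℕ) < k <;> by_cases hj : (σ j : ℕ) < k
  · -- both small
    rw [piF_small hi, piF_small hj] at hij'
    have h1 : 1 ≤ i.val := small_pos h0 ((smallP_iff i).2 hi)
    have h2 : 1 ≤ j.val := small_pos h0 ((smallP_iff j).2 hj)
    exact Fin.ext (by omega)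
  · -- i small, j big
    exfalso
    rw [piF_small hi, piF_big hj] at hij'
    have h1 : 1 ≤ i.val := small_pos h0 ((smallP_iff i).2 hi)
    have hie : i.val = j.val + runlen n k σ j.val + 1 := by omega
    have := runlen_last n k σ j.val hn
    rw [← hie] at this
    exact this ((smallP_iff i).2 hi)
  · -- i big, j small
    exfalso
    rw [piF_big hi, piF_small hj] at hij'
    have h1 : 1 ≤ j.val := small_pos h0 ((smallP_iff j).2 hj)
    have hie : j.val = i.val + runlen n k σ i.val + 1 := by omega
    have := runlen_last n k σ i.val hn
    rw [← hie] at this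
    exact this ((smallP_iff j).2 hj)
  · -- both big
    rw [piF_big hi, piF_big hj] at hij'
    rcases lt_trichotomy i.val j.val with h | h | h
    · exfalso
      have hs := runlen_spec1 n k σ i.val (j.val - i.val) (by omega) (by omega)
      rw [show i.val + (j.val - i.val) = j.val by omega] at hs
      exact hj ((smallP_iff j).1 hs)
    · exact Fin.ext h
    · exfalso
      have hs := runlen_spec1 n k σ j.val (i.val - j.val) (by omega) (by omega)
      rw [show j.val + (i.val - j.val) = i.val by omega] at hs
      exact hi ((smallP_iff i).1 hs)

lemma piF_mono {n k : ℕ} {σ : Equiv.Perm (Fin n)} (h0 : ¬ smallP n k σ 0)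
    {i j : Fin n} (hij : i.val < j.val) (hc : (σ i : ℕ) < k ∨ ¬ (σ j : ℕ) < k) :
    (piF n k σ i).val < (piF n k σ j).val := by
  by_cases hi : (σ i : ℕ) < k <;> by_cases hj : (σ j : ℕ) < k
  · rw [piF_small hi, piF_small hj]
    have h1 : 1 ≤ i.val := small_pos h0 ((smallP_iff i).2 hi)
    omega
  · rw [piF_small hi, piF_big hj]
    omega
  · -- i big, j small : excluded
    rcases hc with h | h
    · exact absurd h hi
    · exact absurd hj h
  · rw [piF_big hi, piF_big hj]
    have hlt : i.val + runlen n k σ i.val < j.val := by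
      by_contra hcon
      have hs := runlen_spec1 n k σ i.val (j.val - i.val) (by omega) (by omega)
      rw [show i.val + (j.val - i.val) = j.val by omega] at hs
      exact hj ((smallP_iff j).1 hs)
    omega

/-- The last non-small position strictly before `j`. -/
noncomputable def bposF (n k : ℕ) (σ : Equiv.Perm (Fin n)) (j : ℕ) : ℕ :=
  Nat.findGreatest (fun m => ¬ smallP n k σ m) (j - 1)

lemma bpos_not_small {n k : ℕ} {σ : Equiv.Perm (Fin n)} (h0 : ¬ smallP n k σ 0) (j : ℕ) :
    ¬ smallP n k σ (bposF n k σ j) :=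
  Nat.findGreatest_spec (P := fun m => ¬ smallP n k σ m) (Nat.zero_le _) h0

lemma bpos_le (n k : ℕ) (σ : Equiv.Perm (Fin n)) (j : ℕ) : bposF n k σ j ≤ j - 1 :=
  Nat.findGreatest_le _

lemma bpos_between {n k : ℕ} {σ : Equiv.Perm (Fin n)} {j m : ℕ}
    (h1 : bposF n k σ j < m) (h2 : m ≤ j - 1) : smallP n k σ m := by
  by_contra hs
  exact absurd (Nat.le_findGreatest h2 hs) (not_le.2 h1)

lemma bpos_eq {n k : ℕ} {σ : Equiv.Perm (Fin n)} (h0 : ¬ smallP n k σ 0) {j m : ℕ}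
    (hm : ¬ smallP n k σ m) (hmj : m < j)
    (hall : ∀ l, m < l → l < j → smallP n k σ l) : bposF n k σ j = m := by
  refine le_antisymm ?_ (Nat.le_findGreatest (by omega) hm)
  by_contra hcon
  have h1 : m < bposF n k σ j := by omega
  have h2 : bposF n k σ j ≤ j - 1 := bpos_le n k σ j
  exact (bpos_not_small h0 j) (hall _ h1 (by omega))

/-- The mapped permutation. -/
noncomputable def PhiF (n k : ℕ) (σ : Equiv.Perm (Fin n)) : Equiv.Perm (Fin n) :=
  if h : Function.Bijective (piF n k σ) then (Equiv.ofBijective _ h).symm.trans σ else σ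

lemma PhiF_symm {n k : ℕ} {σ : Equiv.Perm (Fin n)}
    (hb : Function.Bijective (piF n k σ)) (u : Fin n) :
    (PhiF n k σ).symm u = piF n k σ (σ.symm u) := by
  rw [PhiF, dif_pos hb]
  simp [Equiv.symm_trans_apply]

/-- The factor of `pairWeight` associated to an ordered pair of values. -/
noncomputable def pairFactor (n : ℕ) (p : Fin n → Fin n → ℝ) (σ : Equiv.Perm (Fin n))
    (y : Fin n × Fin n) : ℝ :=
  if σ.symm y.1 < σ.symm y.2 then p y.1 y.2 else p y.2 y.1

lemma pairFactor_pos {n : ℕ} {p : Fin n → Fin n → ℝ} (hpos : ∀ i j : Fin n, 0 < p i j)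
    (σ : Equiv.Perm (Fin n)) (y : Fin n × Fin n) : 0 < pairFactor n p σ y := by
  unfold pairFactor
  split <;> exact hpos _ _

lemma pairWeight_eq_symm (n : ℕ) (p : Fin n → Fin n → ℝ) (σ : Equiv.Perm (Fin n)) :
    pairWeight n p σ =
      ∏ y ∈ Finset.univ.filter (fun y : Fin n × Fin n => y.1 < y.2), pairFactor n p σ y := by
  unfold pairWeight
  refine Finset.prod_nbij'
    (fun x => if σ x.1 < σ x.2 then (σ x.1, σ x.2) else (σ x.2, σ x.1))
    (fun y => if σ.symm y.1 < σ.symm y.2 then (σ.symm y.1, σ.symm y.2)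
      else (σ.symm y.2, σ.symm y.1)) ?_ ?_ ?_ ?_ ?_
  · intro x hx
    have hlt : x.1 < x.2 := (Finset.mem_filter.1 hx).2
    have hne : σ x.1 ≠ σ x.2 := fun h => absurd (σ.injective h) (ne_of_lt hlt)
    by_cases h : σ x.1 < σ x.2
    · simp only [if_pos h]
      exact Finset.mem_filter.2 ⟨Finset.mem_univ _, h⟩
    · simp only [if_neg h]
      exact Finset.mem_filter.2 ⟨Finset.mem_univ _, lt_of_le_of_ne (not_lt.1 h) (Ne.symm hne)⟩
  · intro y hy
    have hlt : y.1 < y.2 := (Finset.mem_filter.1 hy).2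
    have hne : σ.symm y.1 ≠ σ.symm y.2 := fun h => absurd (σ.symm.injective h) (ne_of_lt hlt)
    by_cases h : σ.symm y.1 < σ.symm y.2
    · simp only [if_pos h]
      exact Finset.mem_filter.2 ⟨Finset.mem_univ _, h⟩
    · simp only [if_neg h]
      exact Finset.mem_filter.2 ⟨Finset.mem_univ _, lt_of_le_of_ne (not_lt.1 h) (Ne.symm hne)⟩
  · intro x hx
    have hlt : x.1 < x.2 := (Finset.mem_filter.1 hx).2
    by_cases h : σ x.1 < σ x.2
    · simp [h, hlt]
    · simp only [if_neg h]
      have hnot : ¬ x.2 < x.1 := asymm hlt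
      simp [hnot]
  · intro y hy
    have hlt : y.1 < y.2 := (Finset.mem_filter.1 hy).2
    by_cases h : σ.symm y.1 < σ.symm y.2
    · simp [h, hlt]
    · simp only [if_neg h]
      have hnot : ¬ y.2 < y.1 := asymm hlt
      simp [hnot]
  · intro x hx
    have hlt : x.1 < x.2 := (Finset.mem_filter.1 hx).2
    by_cases h : σ x.1 < σ x.2
    · simp [pairFactor, h, hlt]
    · simp only [if_neg h]
      have hnot : ¬ x.2 < x.1 := asymm hlt
      simp [pairFactor, hnot]

lemma not_smallP_zero {n k : ℕ} {σ : Equiv.Perm (Fin n)} (hn : 0 < n)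
    (hσ0 : k ≤ (σ ⟨0, hn⟩ : ℕ)) : ¬ smallP n k σ 0 := by
  rintro ⟨h, hlt⟩
  exact absurd hlt (not_lt.2 hσ0)

lemma weight_le (n k : ℕ) (hn : 0 < n) (hkn : k < n) (ε : ℝ) (hε : 0 < ε)
    (p : Fin n → Fin n → ℝ) (hpos : ∀ i j : Fin n, 0 < p i j)
    (hbias : ∀ i j : Fin n, i < j → 1 + ε ≤ p i j / p j i)
    (σ : Equiv.Perm (Fin n)) (hσ0 : k ≤ (σ ⟨0, hn⟩ : ℕ)) :
    pairWeight n p σ ≤ (1 + ε)⁻¹ ^ k * pairWeight n p (PhiF n k σ) := by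
  have h0 : ¬ smallP n k σ 0 := not_smallP_zero hn hσ0
  have hb : Function.Bijective (piF n k σ) := Finite.injective_iff_bijective.mp (piF_inj h0)
  have hsymm : ∀ u, (PhiF n k σ).symm u = piF n k σ (σ.symm u) := PhiF_symm hb
  have hbound : ∀ v : Fin n, bposF n k σ (σ.symm v).val < n :=
    fun v => lt_of_le_of_lt (le_trans (bpos_le n k σ _) (Nat.sub_le _ _)) (σ.symm v).isLt
  set bF : Fin n → Fin n := fun v => ⟨bposF n k σ (σ.symm v).val, hbound v⟩ with hbF
  have hbveq : ∀ v : Fin n, (bF v).val = bposF n k σ (σ.symm v).val := fun v => rfl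
  -- basic facts about small values
  have hTva : ∀ v : Fin n, σ (σ.symm v) = v := fun v => σ.apply_symm_apply v
  have hsmallTv : ∀ v : Fin n, (v : ℕ) < k → smallP n k σ (σ.symm v).val := by
    intro v hv
    exact (smallP_iff _).2 (by rw [hTva v]; exact hv)
  have hTv1 : ∀ v : Fin n, (v : ℕ) < k → 1 ≤ (σ.symm v).val :=
    fun v hv => small_pos h0 (hsmallTv v hv)
  have hblt : ∀ v : Fin n, (v : ℕ) < k → (bF v).val < (σ.symm v).val := by
    intro v hv
    have h1 := bpos_le n k σ (σ.symm v).val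
    have h2 := hTv1 v hv
    simp only [hbF]
    omega
  have hbbig : ∀ v : Fin n, ¬ ((σ (bF v) : ℕ) < k) :=
    fun v h => bpos_not_small h0 (σ.symm v).val ((smallP_iff (bF v)).2 h)
  have hflip : ∀ v : Fin n, (v : ℕ) < k →
      (σ.symm v).val ≤ (bF v).val + runlen n k σ (bF v).val := by
    intro v hv
    have hkey : (σ.symm v).val - (bF v).val ≤ runlen n k σ (bF v).val := by
      apply Nat.le_findGreatest (le_of_lt (lt_of_le_of_lt (Nat.sub_le _ _) (σ.symm v).isLt))
      intro l h1 h2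
      rcases lt_or_eq_of_le (show (bF v).val + l ≤ (σ.symm v).val by omega) with h3 | h3
      · exact bpos_between (j := (σ.symm v).val)
          (by rw [← hbveq v]; omega) (by omega)
      · rw [h3]; exact hsmallTv v hv
    have := hblt v hv
    omega
  set smallSet := Finset.univ.filter (fun v : Fin n => (v : ℕ) < k) with hsmallSet
  set F := smallSet.image (fun v => (v, σ (bF v))) with hFdef
  set E := Finset.univ.filter (fun y : Fin n × Fin n => y.1 < y.2) with hEdef
  have hsub : F ⊆ E := by
    intro e he
    obtain ⟨v, hv, rfl⟩ := Finset.mem_image.1 he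
    have hv' : (v : ℕ) < k := (Finset.mem_filter.1 hv).2
    refine Finset.mem_filter.2 ⟨Finset.mem_univ _, ?_⟩
    show v < σ (bF v)
    rw [Fin.lt_def]
    have := not_lt.1 (hbbig v)
    omega
  have hcard : F.card = k := by
    rw [hFdef, Finset.card_image_of_injOn (fun a _ b _ h => congrArg Prod.fst h)]
    have : smallSet = Finset.map (Fin.castLEEmb (le_of_lt hkn)) Finset.univ := by
      ext v
      simp only [hsmallSet, Finset.mem_filter, Finset.mem_univ, true_and, Finset.mem_map]
      constructor
      · intro h
        exact ⟨⟨v.val, h⟩, Fin.ext rfl⟩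
      · rintro ⟨a, rfl⟩
        simpa using a.isLt
    rw [this, Finset.card_map, Finset.card_univ, Fintype.card_fin]
  have h1 : ∀ v ∈ smallSet,
      (1 + ε) * pairFactor n p σ (v, σ (bF v)) ≤ pairFactor n p (PhiF n k σ) (v, σ (bF v)) := by
    intro v hv
    have hv' : (v : ℕ) < k := (Finset.mem_filter.1 hv).2
    have hc1 : ¬ (σ.symm v < σ.symm (σ (bF v))) := by
      rw [Equiv.symm_apply_apply, Fin.lt_def]
      have := hblt v hv'
      omega
    have hfac1 : pairFactor n p σ (v, σ (bF v)) = p (σ (bF v)) v := by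
      unfold pairFactor
      rw [if_neg hc1]
    have hc2 : (PhiF n k σ).symm v < (PhiF n k σ).symm (σ (bF v)) := by
      rw [hsymm, hsymm, Equiv.symm_apply_apply, Fin.lt_def,
        piF_small (by rw [hTva v]; exact hv'), piF_big (hbbig v)]
      have := hflip v hv'
      have := hTv1 v hv'
      have := hblt v hv'
      omega
    have hfac2 : pairFactor n p (PhiF n k σ) (v, σ (bF v)) = p v (σ (bF v)) := by
      unfold pairFactor
      rw [if_pos hc2]
    rw [hfac1, hfac2]
    have hvu : v < σ (bF v) := by
      rw [Fin.lt_def]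
      have := not_lt.1 (hbbig v)
      omega
    exact (le_div_iff₀ (hpos _ _)).1 (hbias v (σ (bF v)) hvu)
  have h2 : ∀ e ∈ E \ F, pairFactor n p σ e = pairFactor n p (PhiF n k σ) e := by
    intro e he
    obtain ⟨heE, heF⟩ := Finset.mem_sdiff.1 he
    have he1 : e.1 < e.2 := (Finset.mem_filter.1 heE).2
    have hs1 : σ (σ.symm e.1) = e.1 := σ.apply_symm_apply e.1
    have hs2 : σ (σ.symm e.2) = e.2 := σ.apply_symm_apply e.2
    have hiff : (σ.symm e.1 < σ.symm e.2) ↔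
        (piF n k σ (σ.symm e.1) < piF n k σ (σ.symm e.2)) := by
      rcases lt_trichotomy (σ.symm e.1) (σ.symm e.2) with hij | hij | hij
      · refine iff_of_true hij ?_
        rw [Fin.lt_def]
        apply piF_mono h0 (Fin.lt_def.1 hij)
        by_contra hc
        push_neg at hc
        obtain ⟨hc1, hc2⟩ := hc
        rw [hs1] at hc1
        rw [hs2] at hc2
        have := Fin.lt_def.1 he1
        omega
      · exfalso
        have heq : e.1 = e.2 := by
          have := congrArg σ hij
          rwa [hs1, hs2] at this
        exact absurd heq (ne_of_lt he1)
      · refine iff_of_false (fun h => asymm hij h) ?_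
        intro hpij
        by_cases hc : (σ (σ.symm e.2) : ℕ) < k ∨ ¬ (σ (σ.symm e.1) : ℕ) < k
        · have := piF_mono h0 (Fin.lt_def.1 hij) hc
          rw [Fin.lt_def] at hpij
          omega
        · push_neg at hc
          obtain ⟨hc2le, hc1⟩ := hc
          have hc2 : ¬ ((σ (σ.symm e.2) : ℕ) < k) := not_lt.2 hc2le
          apply heF
          have hv1 : (piF n k σ (σ.symm e.1)).val = (σ.symm e.1).val - 1 := piF_small hc1
          have hv2 : (piF n k σ (σ.symm e.2)).val
              = (σ.symm e.2).val + runlen n k σ (σ.symm e.2).val := piF_big hc2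
          rw [Fin.lt_def, hv1, hv2] at hpij
          have hTv1' : 1 ≤ (σ.symm e.1).val := small_pos h0 ((smallP_iff _).2 hc1)
          have hije : (σ.symm e.2).val < (σ.symm e.1).val := Fin.lt_def.1 hij
          have hbeq : bposF n k σ (σ.symm e.1).val = (σ.symm e.2).val := by
            apply bpos_eq h0 (fun hsm => hc2 ((smallP_iff _).1 hsm)) hije
            intro l hl1 hl2
            have hsp := runlen_spec1 n k σ (σ.symm e.2).val (l - (σ.symm e.2).val)
              (by omega) (by omega)
            rwa [show (σ.symm e.2).val + (l - (σ.symm e.2).val) = l by omega] at hsp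
          refine Finset.mem_image.2 ⟨e.1,
            Finset.mem_filter.2 ⟨Finset.mem_univ _, by rwa [hs1] at hc1⟩, ?_⟩
          have hbeq2 : bF e.1 = σ.symm e.2 := Fin.ext (by simp only [hbF]; exact hbeq)
          rw [hbeq2, hs2]
    unfold pairFactor
    rw [hsymm, hsymm]
    exact if_congr hiff rfl rfl
  rw [pairWeight_eq_symm n p σ, pairWeight_eq_symm n p (PhiF n k σ)]
  have key : (1 + ε) ^ k * ∏ e ∈ E, pairFactor n p σ e
      ≤ ∏ e ∈ E, pairFactor n p (PhiF n k σ) e := by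
    rw [← Finset.prod_sdiff (f := pairFactor n p σ) hsub,
      ← Finset.prod_sdiff (f := pairFactor n p (PhiF n k σ)) hsub]
    have e1 : ∏ e ∈ E \ F, pairFactor n p σ e = ∏ e ∈ E \ F, pairFactor n p (PhiF n k σ) e :=
      Finset.prod_congr rfl h2
    have e2 : (1 + ε) ^ k * ∏ e ∈ F, pairFactor n p σ e
        ≤ ∏ e ∈ F, pairFactor n p (PhiF n k σ) e := by
      have e2' : (1 + ε) ^ F.card * ∏ e ∈ F, pairFactor n p σ e
          ≤ ∏ e ∈ F, pairFactor n p (PhiF n k σ) e := by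
        rw [← Finset.prod_const, ← Finset.prod_mul_distrib]
        refine Finset.prod_le_prod (fun e _ => ?_) (fun e he => ?_)
        · exact mul_nonneg (by linarith) (le_of_lt (pairFactor_pos hpos σ e))
        · obtain ⟨v, hv, rfl⟩ := Finset.mem_image.1 he
          exact h1 v hv
      rwa [hcard] at e2'
    calc (1 + ε) ^ k * ((∏ e ∈ E \ F, pairFactor n p σ e) * ∏ e ∈ F, pairFactor n p σ e)
        = (∏ e ∈ E \ F, pairFactor n p σ e) * ((1 + ε) ^ k * ∏ e ∈ F, pairFactor n p σ e) := by
          ring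
      _ ≤ (∏ e ∈ E \ F, pairFactor n p σ e) * ∏ e ∈ F, pairFactor n p (PhiF n k σ) e := by
          exact mul_le_mul_of_nonneg_left e2
            (Finset.prod_nonneg fun e _ => le_of_lt (pairFactor_pos hpos σ e))
      _ = (∏ e ∈ E \ F, pairFactor n p (PhiF n k σ) e)
            * ∏ e ∈ F, pairFactor n p (PhiF n k σ) e := by rw [e1]
  have hq : (0 : ℝ) < (1 + ε) ^ k := pow_pos (by linarith) k
  calc (∏ e ∈ E, pairFactor n p σ e)
      = ((1 + ε) ^ k)⁻¹ * ((1 + ε) ^ k * ∏ e ∈ E, pairFactor n p σ e) := by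
        rw [← mul_assoc, inv_mul_cancel₀ (ne_of_gt hq), one_mul]
    _ ≤ ((1 + ε) ^ k)⁻¹ * ∏ e ∈ E, pairFactor n p (PhiF n k σ) e :=
        mul_le_mul_of_nonneg_left key (inv_nonneg.2 (le_of_lt hq))
    _ = (1 + ε)⁻¹ ^ k * ∏ e ∈ E, pairFactor n p (PhiF n k σ) e := by rw [inv_pow]

lemma loc_PhiF (n k : ℕ) (hn : 0 < n) (ℓm ℓp : Fin n → ℝ) (hadm : IsAdmissible n ℓm ℓp)
    (σ : Equiv.Perm (Fin n)) (hloc : IsLocalized n ℓm ℓp σ) (hσ0 : k ≤ (σ ⟨0, hn⟩ : ℕ)) :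
    IsLocalized n ℓm ℓp (PhiF n k σ) := by
  have h0 : ¬ smallP n k σ 0 := not_smallP_zero hn hσ0
  have hb : Function.Bijective (piF n k σ) := Finite.injective_iff_bijective.mp (piF_inj h0)
  have hsymm : ∀ u, (PhiF n k σ).symm u = piF n k σ (σ.symm u) := PhiF_symm hb
  -- the value at position 0 has ℓm ≥ its own value
  have ha : (((σ ⟨0, hn⟩ : Fin n) : ℕ) : ℝ) ≤ ℓm (σ ⟨0, hn⟩) := by
    have h1 := (hloc (σ ⟨0, hn⟩)).1
    rw [Equiv.symm_apply_apply] at h1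
    simp only [Fin.val_mk, Nat.cast_zero] at h1
    linarith
  intro u
  rw [hsymm u]
  have hloc_u := hloc u
  by_cases hu : (σ (σ.symm u) : ℕ) < k
  · -- u is a small value
    have huk : (u : ℕ) < k := by rwa [Equiv.apply_symm_apply] at hu
    have hv : (piF n k σ (σ.symm u)).val = (σ.symm u).val - 1 := piF_small hu
    have h1i : 1 ≤ (σ.symm u).val := small_pos h0 ((smallP_iff _).2 hu)
    have hua : u < σ ⟨0, hn⟩ := by
      rw [Fin.lt_def]
      omega
    have hadm1 := (hadm.2 u (σ ⟨0, hn⟩) hua).1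
    have hcast1 : (1 : ℝ) ≤ ((σ.symm u).val : ℝ) := by exact_mod_cast h1i
    rw [hv, Nat.cast_sub h1i, Nat.cast_one]
    constructor
    · have hℓmu : ((u : ℕ) : ℝ) ≤ ℓm u := by linarith
      linarith
    · have := hloc_u.2
      linarith
  · -- u is a big value
    have hv : (piF n k σ (σ.symm u)).val
        = (σ.symm u).val + runlen n k σ (σ.symm u).val := piF_big hu
    rcases Nat.eq_zero_or_pos (runlen n k σ (σ.symm u).val) with h | h
    · rw [hv, h, Nat.add_zero]
      exact hloc_u
    · have hjlt : (σ.symm u).val + runlen n k σ (σ.symm u).val < n :=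
        runlen_add_lt n k σ _ (σ.symm u).isLt
      have hsm : smallP n k σ ((σ.symm u).val + runlen n k σ (σ.symm u).val) :=
        runlen_spec1 n k σ _ _ h le_rfl
      set vv := σ ⟨(σ.symm u).val + runlen n k σ (σ.symm u).val, hjlt⟩ with hvv
      have hvvk : (vv : ℕ) < k := by
        obtain ⟨hh, hlt⟩ := hsm
        exact hlt
      have hTvv : σ.symm vv = ⟨(σ.symm u).val + runlen n k σ (σ.symm u).val, hjlt⟩ :=
        Equiv.symm_apply_apply σ _
      have huk : k ≤ (u : ℕ) := by
        rw [← Equiv.apply_symm_apply σ u]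
        exact not_lt.1 hu
      have hvvu : vv < u := by
        rw [Fin.lt_def]
        omega
      have hadm2 := (hadm.2 vv u hvvu).2
      have hlocvv : (((σ.symm u).val + runlen n k σ (σ.symm u).val : ℕ) : ℝ)
          - ((vv : ℕ) : ℝ) ≤ ℓp vv := by
        have h2 := (hloc vv).2
        rw [hTvv] at h2
        exact h2
      rw [hv]
      push_cast at hlocvv ⊢
      constructor
      · have := hloc_u.1
        have hrnn : (0 : ℝ) ≤ (runlen n k σ (σ.symm u).val : ℝ) := Nat.cast_nonneg _
        linarith
      · linarith

lemma pairWeight_nonneg {n : ℕ} {p : Fin n → Fin n → ℝ} (hpos : ∀ i j : Fin n, 0 < p i j)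
    (σ : Equiv.Perm (Fin n)) : 0 ≤ pairWeight n p σ :=
  Finset.prod_nonneg fun x _ => le_of_lt (hpos _ _)

lemma PhiF_inj (n k : ℕ) (hn : 0 < n) (σ₁ σ₂ : Equiv.Perm (Fin n))
    (h01 : k ≤ (σ₁ ⟨0, hn⟩ : ℕ)) (h02 : k ≤ (σ₂ ⟨0, hn⟩ : ℕ))
    (heq : PhiF n k σ₁ = PhiF n k σ₂) : σ₁ = σ₂ := by
  have h0₁ := not_smallP_zero hn h01
  have h0₂ := not_smallP_zero hn h02
  have hb₁ := Finite.injective_iff_bijective.mp (piF_inj h0₁)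
  have hb₂ := Finite.injective_iff_bijective.mp (piF_inj h0₂)
  have hEq : ∀ u, piF n k σ₁ (σ₁.symm u) = piF n k σ₂ (σ₂.symm u) := by
    intro u
    rw [← PhiF_symm hb₁, ← PhiF_symm hb₂, heq]
  have hA : ∀ v : Fin n, (v : ℕ) < k → σ₁.symm v = σ₂.symm v := by
    intro v hv
    have h1 : (σ₁ (σ₁.symm v) : ℕ) < k := by rw [Equiv.apply_symm_apply]; exact hv
    have h2 : (σ₂ (σ₂.symm v) : ℕ) < k := by rw [Equiv.apply_symm_apply]; exact hv
    have hvals := congrArg Fin.val (hEq v)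
    rw [piF_small h1, piF_small h2] at hvals
    have ht1 : 1 ≤ (σ₁.symm v).val := small_pos h0₁ ((smallP_iff _).2 h1)
    have ht2 : 1 ≤ (σ₂.symm v).val := small_pos h0₂ ((smallP_iff _).2 h2)
    exact Fin.ext (by omega)
  have hB : ∀ i : Fin n, ((σ₁ i : ℕ) < k ↔ (σ₂ i : ℕ) < k) := by
    intro i
    constructor
    · intro h
      have h3 : σ₂.symm (σ₁ i) = i := by rw [← hA (σ₁ i) h, Equiv.symm_apply_apply]
      have h4 : σ₂ i = σ₁ i := by
        conv_lhs => rw [← h3]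
        exact Equiv.apply_symm_apply σ₂ (σ₁ i)
      rw [h4]; exact h
    · intro h
      have h3 : σ₁.symm (σ₂ i) = i := by rw [hA (σ₂ i) h, Equiv.symm_apply_apply]
      have h4 : σ₁ i = σ₂ i := by
        conv_lhs => rw [← h3]
        exact Equiv.apply_symm_apply σ₁ (σ₂ i)
      rw [h4]; exact h
  have hsm : smallP n k σ₁ = smallP n k σ₂ := by
    funext m
    apply propext
    constructor
    · rintro ⟨h, hlt⟩; exact ⟨h, (hB ⟨m, h⟩).1 hlt⟩
    · rintro ⟨h, hlt⟩; exact ⟨h, (hB ⟨m, h⟩).2 hlt⟩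
  have hrun : runlen n k σ₁ = runlen n k σ₂ := by
    funext i
    unfold runlen
    rw [hsm]
  have hpi : piF n k σ₁ = piF n k σ₂ := by
    funext i
    by_cases h : (σ₁ i : ℕ) < k
    · exact Fin.ext (by rw [piF_small h, piF_small ((hB i).1 h)])
    · exact Fin.ext (by rw [piF_big h, piF_big (fun hh => h ((hB i).2 hh)), hrun])
  have hD : ∀ u, σ₁.symm u = σ₂.symm u := by
    intro u
    apply piF_inj h0₂
    have h5 := hEq u
    rwa [hpi] at h5
  have hsymm_eq : σ₁.symm = σ₂.symm := Equiv.ext hD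
  simpa using congrArg Equiv.symm hsymm_eq

/-- for the ε-positively biased measure `μ` conditioned on an
`n`-admissible localization event, for every `k ≥ 1`,
`μ(σ(1) ∉ {1,…,k} | ℓ-loc) ≤ (1+ε)^{-k}` (stated via unnormalized weights; positions
and labels are 0-indexed, so the particle at the first position has label `σ(0)` and
`σ(1) ∉ {1,…,k}` reads `k ≤ σ(0)`).  In particular the label at position 1 is
stochastically dominated by a `Geom(ε/(1+ε))` random variable. -/
theorem stmt4 (n : ℕ) (hn : 0 < n) (ε : ℝ) (hε : 0 < ε)
    (p : Fin n → Fin n → ℝ) (hpos : ∀ i j : Fin n, 0 < p i j)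
    (hbias : ∀ i j : Fin n, i < j → 1 + ε ≤ p i j / p j i)
    (ℓm ℓp : Fin n → ℝ) (hadm : IsAdmissible n ℓm ℓp)
    (hne : ∃ σ : Equiv.Perm (Fin n), IsLocalized n ℓm ℓp σ)
    (k : ℕ) (hk : 1 ≤ k) :
    ∑ σ ∈ Finset.univ.filter (fun σ : Equiv.Perm (Fin n) =>
        IsLocalized n ℓm ℓp σ ∧ k ≤ (σ ⟨0, hn⟩ : ℕ)), pairWeight n p σ
      ≤ (1 + ε)⁻¹ ^ k *
        ∑ σ ∈ Finset.univ.filter (fun σ : Equiv.Perm (Fin n) => IsLocalized n ℓm ℓp σ),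
          pairWeight n p σ := by
  by_cases hkn : k < n
  · set s := Finset.univ.filter (fun σ : Equiv.Perm (Fin n) =>
      IsLocalized n ℓm ℓp σ ∧ k ≤ (σ ⟨0, hn⟩ : ℕ)) with hs
    set t := Finset.univ.filter (fun σ : Equiv.Perm (Fin n) =>
      IsLocalized n ℓm ℓp σ) with ht
    have hmem : ∀ σ ∈ s, IsLocalized n ℓm ℓp σ ∧ k ≤ (σ ⟨0, hn⟩ : ℕ) :=
      fun σ hσ => (Finset.mem_filter.1 hσ).2
    calc ∑ σ ∈ s, pairWeight n p σ
        ≤ ∑ σ ∈ s, (1 + ε)⁻¹ ^ k * pairWeight n p (PhiF n k σ) :=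
          Finset.sum_le_sum (fun σ hσ =>
            weight_le n k hn hkn ε hε p hpos hbias σ (hmem σ hσ).2)
      _ = (1 + ε)⁻¹ ^ k * ∑ σ ∈ s, pairWeight n p (PhiF n k σ) := by
          rw [Finset.mul_sum]
      _ = (1 + ε)⁻¹ ^ k * ∑ τ ∈ s.image (PhiF n k), pairWeight n p τ := by
          rw [Finset.sum_image (fun x hx y hy hxy =>
            PhiF_inj n k hn x y (hmem x hx).2 (hmem y hy).2 hxy)]
      _ ≤ (1 + ε)⁻¹ ^ k * ∑ τ ∈ t, pairWeight n p τ := by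
          refine mul_le_mul_of_nonneg_left ?_ (pow_nonneg (inv_nonneg.2 (by linarith)) k)
          refine Finset.sum_le_sum_of_subset_of_nonneg ?_ (fun τ _ _ => pairWeight_nonneg hpos τ)
          intro τ hτ
          obtain ⟨σ, hσ, rfl⟩ := Finset.mem_image.1 hτ
          exact Finset.mem_filter.2 ⟨Finset.mem_univ _,
            loc_PhiF n k hn ℓm ℓp hadm σ (hmem σ hσ).1 (hmem σ hσ).2⟩
  · have hse : Finset.univ.filter (fun σ : Equiv.Perm (Fin n) =>
        IsLocalized n ℓm ℓp σ ∧ k ≤ (σ ⟨0, hn⟩ : ℕ)) = ∅ := by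
      apply Finset.filter_eq_empty_iff.2
      intro σ _
      rintro ⟨-, hge⟩
      have := (σ ⟨0, hn⟩).isLt
      omega
    rw [hse, Finset.sum_empty]
    exact mul_nonneg (pow_nonneg (inv_nonneg.2 (by linarith)) k)
      (Finset.sum_nonneg fun σ _ => pairWeight_nonneg hpos σ)
end

section
/- Let Y_1, …, Y_k be independent geometric random variables with success probabilities a_1, …, a_k ∈ (0,1] (supported on {1,2,3,…}), and set S = ∑_{i=1}^k 1/a_i. Then there is a universal constant C > 0 such that for every u > 0, P(∑_{i=1}^k Y_i ≥ S + u) ≤ exp(−C · min{ u² / ∑_{i=1}^k (1−a_i)/a_i², u · min_i a_i }). -/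
open MeasureTheory ProbabilityTheory Real

-- exp upper bound
lemma exp_ub {t : ℝ} (ht : 0 ≤ t) (ht1 : t ≤ 1) : Real.exp t ≤ 1 + t + t ^ 2 := by
  have h := Real.exp_bound' ht ht1 (n := 2) (by norm_num)
  simp [Finset.sum_range_succ, Nat.factorial] at h
  nlinarith [h]

lemma aux_ineq {a t : ℝ} (ha : 0 < a) (ha1 : a ≤ 1) (ht : 0 < t) (hta : t ≤ a / 4) :
    a * Real.exp t / (1 - (1 - a) * Real.exp t) ≤
      Real.exp (t / a + 5 * (1 - a) * t ^ 2 / a ^ 2) := by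
  set q : ℝ := 1 - a with hq
  have hq0 : 0 ≤ q := by simp [hq]; linarith
  have ht1 : t ≤ 1 / 4 := le_trans hta (by linarith)
  have hE := exp_ub ht.le (by linarith)
  have hE1 : (1:ℝ) ≤ Real.exp t := by
    have := Real.add_one_le_exp t; linarith
  have hden : 11 / 16 * a ≤ 1 - q * Real.exp t := by
    nlinarith [mul_le_mul_of_nonneg_left hE hq0, sq_nonneg t]
  have hdenpos : 0 < 1 - q * Real.exp t := by nlinarith
  rw [div_le_iff₀ hdenpos]
  have key : Real.exp (t / a + 5 * q * t ^ 2 / a ^ 2) =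
      Real.exp t * Real.exp (q * t / a + 5 * q * t ^ 2 / a ^ 2) := by
    rw [← Real.exp_add]; congr 1; field_simp; ring
  rw [key]
  have hδ : (1 : ℝ) + (q * t / a + 5 * q * t ^ 2 / a ^ 2) ≤
      Real.exp (q * t / a + 5 * q * t ^ 2 / a ^ 2) := by
    have := Real.add_one_le_exp (q * t / a + 5 * q * t ^ 2 / a ^ 2); linarith
  -- suffices: a ≤ (1 - q E)(1 + δ)
  have hmain : a ≤ (1 - q * Real.exp t) * (1 + (q * t / a + 5 * q * t ^ 2 / a ^ 2)) := by
    have h1 : a - q * (t + t ^ 2) ≤ 1 - q * Real.exp t := by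
      nlinarith [mul_le_mul_of_nonneg_left hE hq0]
    have h2 : 0 < 1 + (q * t / a + 5 * q * t ^ 2 / a ^ 2) := by positivity
    have h3 : a ≤ (a - q * (t + t ^ 2)) * (1 + (q * t / a + 5 * q * t ^ 2 / a ^ 2)) := by
      have ha2 : (0:ℝ) < a ^ 2 := by positivity
      rw [← sub_nonneg]
      have expand : (a - q * (t + t ^ 2)) * (1 + (q * t / a + 5 * q * t ^ 2 / a ^ 2)) - a =
          (q * t ^ 2 * (5 * a - q * a - a ^ 2 - q * t * (5 + a + 5 * t))) / a ^ 2 := by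
        field_simp; ring
      rw [expand]
      apply div_nonneg _ ha2.le
      have : 0 ≤ 5 * a - q * a - a ^ 2 - q * t * (5 + a + 5 * t) := by
        nlinarith [mul_nonneg hq0 ht.le]
      positivity
    calc a ≤ (a - q * (t + t ^ 2)) * (1 + (q * t / a + 5 * q * t ^ 2 / a ^ 2)) := h3
      _ ≤ (1 - q * Real.exp t) * (1 + (q * t / a + 5 * q * t ^ 2 / a ^ 2)) := by
          apply mul_le_mul_of_nonneg_right h1 h2.le
  calc a * Real.exp t ≤ ((1 - q * Real.exp t) * (1 + (q * t / a + 5 * q * t ^ 2 / a ^ 2))) * Real.exp t := by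
        apply mul_le_mul_of_nonneg_right hmain (Real.exp_nonneg t)
    _ ≤ (1 - q * Real.exp t) * (Real.exp t * Real.exp (q * t / a + 5 * q * t ^ 2 / a ^ 2)) := by
        rw [mul_comm (Real.exp t)]
        rw [mul_assoc]
        apply mul_le_mul_of_nonneg_left _ hdenpos.le
        apply mul_le_mul_of_nonneg_right hδ (Real.exp_nonneg t)
    _ = Real.exp t * Real.exp (q * t / a + 5 * q * t ^ 2 / a ^ 2) * (1 - q * Real.exp t) := by
        ring


lemma den_pos' {a t : ℝ} (ha : 0 < a) (ha1 : a ≤ 1) (ht : 0 < t) (hta : t ≤ a / 4) :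
    0 < 1 - (1 - a) * Real.exp t := by
  have hq0 : (0:ℝ) ≤ 1 - a := by linarith
  have hE := exp_ub ht.le (by linarith)
  nlinarith [mul_le_mul_of_nonneg_left hE hq0, sq_nonneg t]

section
variable {Ω : Type} [MeasurableSpace Ω] {μ : Measure Ω} [IsProbabilityMeasure μ]

lemma geom_zero {Y : Ω → ℕ} (hY : Measurable Y) {a : ℝ} (ha : 0 < a) (ha1 : a ≤ 1)
    (hpmf : ∀ m : ℕ, μ {ω | Y ω = m + 1} = ENNReal.ofReal (a * (1 - a) ^ m)) :
    μ {ω | Y ω = 0} = 0 := by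
  have hq0 : 0 ≤ 1 - a := by linarith
  have hq1 : 1 - a < 1 := by linarith
  have hsum : Summable (fun m : ℕ => a * (1 - a) ^ m) :=
    (summable_geometric_of_lt_one hq0 hq1).mul_left a
  have htail : ∑' m : ℕ, μ {ω | Y ω = m + 1} = 1 := by
    simp_rw [hpmf]
    rw [← ENNReal.ofReal_tsum_of_nonneg (fun m => by positivity) hsum,
      tsum_mul_left, tsum_geometric_of_lt_one hq0 hq1]
    have : a * (1 - (1 - a))⁻¹ = 1 := by rw [sub_sub_cancel, mul_inv_cancel₀ ha.ne']
    rw [this, ENNReal.ofReal_one]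
  have hpart : ∑' n : ℕ, μ {ω | Y ω = n} = 1 := by
    have hdisj : Pairwise (Function.onFun Disjoint (fun n : ℕ => {ω | Y ω = n})) := by
      intro i j hij
      apply Set.disjoint_left.mpr
      intro ω h1 h2
      exact hij (h1 ▸ h2 ▸ rfl)
    have hms : ∀ n : ℕ, MeasurableSet {ω | Y ω = n} := fun n =>
      hY (measurableSet_singleton n)
    rw [← measure_iUnion hdisj hms]
    have : (⋃ n : ℕ, {ω | Y ω = n}) = Set.univ := by ext ω; simp
    rw [this, measure_univ]
  have hsplit : (1:ENNReal) = μ {ω | Y ω = 0} + 1 := by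
    conv_lhs => rw [← hpart]
    rw [tsum_eq_zero_add' ENNReal.summable, htail]
  have h2 : μ {ω | Y ω = 0} + 1 = 0 + 1 := by rw [zero_add]; exact hsplit.symm
  exact (ENNReal.add_left_inj (by norm_num)).mp h2

lemma geom_lintegral {Y : Ω → ℕ} (hY : Measurable Y) {a : ℝ} (ha : 0 < a) (ha1 : a ≤ 1)
    (hpmf : ∀ m : ℕ, μ {ω | Y ω = m + 1} = ENNReal.ofReal (a * (1 - a) ^ m))
    {t : ℝ} (ht : 0 < t) (hta : t ≤ a / 4) :
    ∫⁻ ω, ENNReal.ofReal (Real.exp (t * (Y ω : ℝ))) ∂μ =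
      ENNReal.ofReal (a * Real.exp t / (1 - (1 - a) * Real.exp t)) := by
  have hq0 : 0 ≤ 1 - a := by linarith
  have hdp := den_pos' ha ha1 ht hta
  have hr0 : 0 ≤ (1 - a) * Real.exp t := mul_nonneg hq0 (Real.exp_nonneg t)
  have hr1 : (1 - a) * Real.exp t < 1 := by linarith
  have hmf : Measurable (fun n : ℕ => ENNReal.ofReal (Real.exp (t * (n : ℝ)))) :=
    measurable_from_top
  have hmap : ∫⁻ ω, ENNReal.ofReal (Real.exp (t * (Y ω : ℝ))) ∂μ =
      ∫⁻ n, ENNReal.ofReal (Real.exp (t * (n : ℝ))) ∂(Measure.map Y μ) :=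
    (lintegral_map hmf hY).symm
  rw [hmap, lintegral_countable']
  have hfib : ∀ n : ℕ, (Measure.map Y μ) {n} = μ {ω | Y ω = n} := by
    intro n
    rw [Measure.map_apply hY (measurableSet_singleton n)]
    rfl
  simp_rw [hfib]
  rw [tsum_eq_zero_add' ENNReal.summable]
  rw [geom_zero hY ha ha1 hpmf, mul_zero, zero_add]
  have hterm : ∀ m : ℕ,
      ENNReal.ofReal (Real.exp (t * ((m + 1 : ℕ) : ℝ))) * μ {ω | Y ω = m + 1} =
      ENNReal.ofReal ((a * Real.exp t) * ((1 - a) * Real.exp t) ^ m) := by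
    intro m
    rw [hpmf m, ← ENNReal.ofReal_mul (Real.exp_nonneg _)]
    congr 1
    have : Real.exp (t * ((m + 1 : ℕ) : ℝ)) = Real.exp t ^ (m + 1) := by
      rw [mul_comm, ← Real.exp_nat_mul]
    rw [this, mul_pow]; ring
  simp_rw [hterm]
  rw [← ENNReal.ofReal_tsum_of_nonneg (fun m => by positivity)
    (((summable_geometric_of_lt_one hr0 hr1).mul_left _))]
  rw [tsum_mul_left, tsum_geometric_of_lt_one hr0 hr1, ← div_eq_mul_inv]

lemma geom_integrable {Y : Ω → ℕ} (hY : Measurable Y) {a : ℝ} (ha : 0 < a) (ha1 : a ≤ 1)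
    (hpmf : ∀ m : ℕ, μ {ω | Y ω = m + 1} = ENNReal.ofReal (a * (1 - a) ^ m))
    {t : ℝ} (ht : 0 < t) (hta : t ≤ a / 4) :
    Integrable (fun ω => Real.exp (t * (Y ω : ℝ))) μ := by
  have hmeas : Measurable (fun ω => Real.exp (t * (Y ω : ℝ))) :=
    ((measurable_from_top.comp hY : Measurable fun ω => ((Y ω : ℝ))).const_mul t).exp
  refine ⟨hmeas.aestronglyMeasurable, ?_⟩
  rw [hasFiniteIntegral_iff_ofReal (Filter.Eventually.of_forall fun ω => Real.exp_nonneg _)]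
  rw [geom_lintegral hY ha ha1 hpmf ht hta]
  exact ENNReal.ofReal_lt_top

lemma geom_mgf_le {Y : Ω → ℕ} (hY : Measurable Y) {a : ℝ} (ha : 0 < a) (ha1 : a ≤ 1)
    (hpmf : ∀ m : ℕ, μ {ω | Y ω = m + 1} = ENNReal.ofReal (a * (1 - a) ^ m))
    {t : ℝ} (ht : 0 < t) (hta : t ≤ a / 4) :
    mgf (fun ω => ((Y ω : ℝ))) μ t ≤
      Real.exp (t / a + 5 * (1 - a) * t ^ 2 / a ^ 2) := by
  have hmeas : Measurable (fun ω => Real.exp (t * (Y ω : ℝ))) :=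
    ((measurable_from_top.comp hY : Measurable fun ω => ((Y ω : ℝ))).const_mul t).exp
  have : mgf (fun ω => ((Y ω : ℝ))) μ t = a * Real.exp t / (1 - (1 - a) * Real.exp t) := by
    rw [mgf]
    rw [integral_eq_lintegral_of_nonneg_ae
      (Filter.Eventually.of_forall fun ω => Real.exp_nonneg _) hmeas.aestronglyMeasurable]
    rw [geom_lintegral hY ha ha1 hpmf ht hta, ENNReal.toReal_ofReal]
    have hdp := den_pos' ha ha1 ht hta
    positivity
  rw [this]
  exact aux_ineq ha ha1 ht hta

end

open MeasureTheory ProbabilityTheory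

theorem stmt6 :
    ∃ C : ℝ, 0 < C ∧
      ∀ (k : ℕ) (hk : 0 < k) (a : Fin k → ℝ) (_ : ∀ i, 0 < a i ∧ a i ≤ 1)
        (Ω : Type) (_ : MeasurableSpace Ω) (μ : Measure Ω)
        (_ : IsProbabilityMeasure μ) (Y : Fin k → Ω → ℕ)
        (_ : ∀ i, Measurable (Y i))
        (_ : iIndepFun Y μ)
        (_ : ∀ i (m : ℕ), μ {ω | Y i ω = m + 1} = ENNReal.ofReal (a i * (1 - a i) ^ m))
        (u : ℝ), 0 < u →
          (μ {ω | (∑ i, 1 / a i) + u ≤ ∑ i, (Y i ω : ℝ)}).toReal ≤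
            Real.exp (-C * min (u ^ 2 / ∑ i, (1 - a i) / a i ^ 2)
              (u * Finset.univ.inf' (Finset.univ_nonempty_iff.mpr ⟨⟨0, hk⟩⟩) a)) := by
  refine ⟨1/20, by norm_num, ?_⟩
  intro k hk a ha Ω mΩ μ hμ Y hYm hind hpmf u hu
  set A := Finset.univ.inf' (Finset.univ_nonempty_iff.mpr ⟨⟨0, hk⟩⟩) a with hAdef
  have hA0 : 0 < A := by
    rw [hAdef, Finset.lt_inf'_iff]; exact fun i _ => (ha i).1
  have hAle : ∀ i, A ≤ a i := fun i => Finset.inf'_le _ (Finset.mem_univ i)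
  set V := ∑ i, (1 - a i) / a i ^ 2 with hVdef
  have hV0 : 0 ≤ V := Finset.sum_nonneg fun i _ => by
    have h1 := (ha i).1; have h2 := (ha i).2
    apply div_nonneg (by linarith) (by positivity)
  set S := ∑ i, 1 / a i with hSdef
  have hP1 : ∀ s : Set Ω, (μ s).toReal ≤ 1 := fun s =>
    le_of_le_of_eq (ENNReal.toReal_mono ENNReal.one_ne_top prob_le_one) rfl
  rcases eq_or_lt_of_le hV0 with hVz | hVpos
  · have hR : Real.exp (-(1/20) * min (u ^ 2 / V) (u * A)) = 1 := by
      rw [← hVz, div_zero, min_eq_left (mul_nonneg hu.le hA0.le)]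
      norm_num
    rw [hR]
    exact hP1 _
  · set t := min (u / (10 * V)) (A / 4) with htdef
    have ht0 : 0 < t := lt_min (by positivity) (by positivity)
    have htai : ∀ i, t ≤ a i / 4 := fun i => by
      have h1 : t ≤ A / 4 := min_le_right _ _
      have := hAle i; linarith
    set X : Fin k → Ω → ℝ := fun i ω => ((Y i ω : ℝ)) with hXdef
    have hXm : ∀ i, Measurable (X i) := fun i => measurable_from_top.comp (hYm i)
    have hindX : iIndepFun X μ :=
      hind.comp (fun _ (n : ℕ) => ((n : ℝ))) (fun _ => measurable_from_top)
    have hint : ∀ i, Integrable (fun ω => Real.exp (t * X i ω)) μ := fun i =>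
      geom_integrable (hYm i) (ha i).1 (ha i).2 (hpmf i) ht0 (htai i)
    have hintsum : Integrable (fun ω => Real.exp (t * (∑ i, X i) ω)) μ :=
      hindX.integrable_exp_mul_sum hXm (fun i _ => hint i)
    have hset : {ω | S + u ≤ ∑ i, (Y i ω : ℝ)} = {ω | S + u ≤ (∑ i, X i) ω} := by
      ext ω; simp [hXdef, Finset.sum_apply]
    rw [hset]
    have hcher := measure_ge_le_exp_mul_mgf (μ := μ) (X := ∑ i, X i) (S + u) ht0.le hintsum
    refine hcher.trans ?_
    have hmgf : mgf (∑ i, X i) μ t ≤ Real.exp (t * S + 5 * t ^ 2 * V) := by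
      rw [hindX.mgf_sum hXm]
      calc ∏ i, mgf (X i) μ t
          ≤ ∏ i, Real.exp (t / a i + 5 * (1 - a i) * t ^ 2 / a i ^ 2) :=
            Finset.prod_le_prod (fun i _ => mgf_nonneg)
              (fun i _ => geom_mgf_le (hYm i) (ha i).1 (ha i).2 (hpmf i) ht0 (htai i))
        _ = Real.exp (∑ i, (t / a i + 5 * (1 - a i) * t ^ 2 / a i ^ 2)) :=
            (Real.exp_sum _ _).symm
        _ = Real.exp (t * S + 5 * t ^ 2 * V) := by
            congr 1
            rw [Finset.sum_add_distrib, hSdef, hVdef, Finset.mul_sum, Finset.mul_sum]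
            congr 1
            · exact Finset.sum_congr rfl fun i _ => by rw [mul_one_div]
            · exact Finset.sum_congr rfl fun i _ => by
                have h1 := (ha i).1
                field_simp
    have hstep : Real.exp (-t * (S + u)) * mgf (∑ i, X i) μ t ≤
        Real.exp (-t * (S + u)) * Real.exp (t * S + 5 * t ^ 2 * V) :=
      mul_le_mul_of_nonneg_left hmgf (Real.exp_nonneg _)
    refine hstep.trans ?_
    rw [← Real.exp_add]
    apply Real.exp_le_exp.mpr
    -- arithmetic: -t(S+u) + tS + 5t²V ≤ -(1/20) min(u²/V, uA)
    have htu : min (u ^ 2 / V) (u * A) ≤ 10 * (t * u) := by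
      rcases min_cases (u / (10 * V)) (A / 4) with ⟨he, _⟩ | ⟨he, _⟩
      · have h10 : 10 * (t * u) = u ^ 2 / V := by
          rw [htdef, he]; field_simp
        rw [h10]; exact min_le_left _ _
      · have h10 : 10 * (t * u) = 10 * (A / 4 * u) := by rw [htdef, he]
        calc min (u ^ 2 / V) (u * A) ≤ u * A := min_le_right _ _
          _ ≤ 10 * (t * u) := by rw [h10]; nlinarith [hu, hA0]
    have h5 : 5 * t ^ 2 * V ≤ t * u / 2 := by
      have hle : t ≤ u / (10 * V) := min_le_left _ _
      have h2 : t * (10 * V) ≤ u := by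
        rw [← le_div_iff₀ (by positivity)]; exact hle
      nlinarith [ht0.le, hVpos.le]
    nlinarith [htu, h5]
end

section
/- Let μ be the ε-positively biased permutation measure on S_n conditioned on an n-admissible ℓ-localization event. Then for every position k ∈ [n], the probability that k is a disconnecting position for σ (i.e., σ maps {1,…,k} onto {1,…,k} as unordered sets, equivalently {σ(1),…,σ(k)} = {1,…,k}) is at least ∏_{i=1}^{∞} (1 − (1+ε)^{-i}), which is a positive constant depending only on ε (equal to e^{−O(1/ε)}). -/
open Finset
open scoped Classical

/-- Position `k` (1-indexed; here the first `k` 0-indexed positions) is disconnecting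
for `σ` if `σ` maps `{1,…,k}` onto `{1,…,k}` as unordered sets. -/
def Disconnecting (n : ℕ) (σ : Equiv.Perm (Fin n)) (k : ℕ) : Prop :=
  (fun t => σ t) '' {t : Fin n | (t : ℕ) < k} = {t : Fin n | (t : ℕ) < k}

variable {q : ℝ}

lemma expFactor (h0 : 0 ≤ q) (h1 : q < 1) {x : ℝ} (hx0 : 0 ≤ x) (hxq : x ≤ q) :
    Real.exp (-(x / (1 - q))) ≤ 1 - x := by
  have hq1 : 0 < 1 - q := by linarith
  set t := x / (1 - q) with ht
  have ht0 : 0 ≤ t := div_nonneg hx0 hq1.le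
  have htx : t * (1 - q) = x := by rw [ht, div_mul_cancel₀ x hq1.ne']
  have h2 : (1 + t) * Real.exp (-t) ≤ 1 := by
    have := Real.add_one_le_exp t
    have hpos := Real.exp_pos (-t)
    nlinarith [Real.exp_neg t ▸ (mul_inv_cancel₀ (Real.exp_pos t).ne' : Real.exp t * (Real.exp t)⁻¹ = 1)]
  have hpos := Real.exp_pos (-t)
  nlinarith [mul_nonneg ht0 (sub_nonneg.mpr hxq)]

lemma sumGeomF (h0 : 0 ≤ q) (h1 : q < 1) (F : Finset ℕ) :
    ∑ i ∈ F, q ^ (i + 1) ≤ q / (1 - q) := by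
  have hs : Summable (fun i : ℕ => q ^ (i + 1)) := by
    have := (summable_geometric_of_lt_one h0 h1).mul_left q
    refine this.congr (fun i => ?_); ring
  have h2 : ∑ i ∈ F, q ^ (i + 1) ≤ ∑' i : ℕ, q ^ (i + 1) :=
    Summable.sum_le_tsum F (fun i _ => by positivity) hs
  have h3 : ∑' i : ℕ, q ^ (i + 1) = q * (1 - q)⁻¹ := by
    have : ∑' i : ℕ, q ^ (i + 1) = q * ∑' i : ℕ, q ^ i := by
      rw [← tsum_mul_left]; congr 1; ext i; ring
    rw [this, tsum_geometric_of_lt_one h0 h1]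
  rw [h3] at h2; rw [div_eq_mul_inv]; exact h2

lemma prodLB (h0 : 0 ≤ q) (h1 : q < 1) (F : Finset ℕ) :
    Real.exp (-(q / (1 - q) ^ 2)) ≤ ∏ i ∈ F, (1 - q ^ (i + 1)) := by
  have hq1 : 0 < 1 - q := by linarith
  calc Real.exp (-(q / (1 - q) ^ 2)) ≤ Real.exp (-(∑ i ∈ F, q ^ (i + 1) / (1 - q))) := by
        apply Real.exp_le_exp.mpr
        rw [neg_le_neg_iff, ← Finset.sum_div]
        rw [div_le_div_iff₀ hq1 (by positivity)]
        calc (∑ i ∈ F, q ^ (i+1)) * (1-q)^2 = ((∑ i ∈ F, q ^ (i+1)) * (1-q)) * (1-q) := by ring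
          _ ≤ q * (1 - q) := by
              have h5 := sumGeomF h0 h1 F
              rw [div_eq_mul_inv] at h5
              have h6 := mul_le_mul_of_nonneg_right h5 hq1.le
              have h7 : q * (1-q)⁻¹ * (1-q) = q := by field_simp
              nlinarith [Finset.sum_nonneg (fun i (_ : i ∈ F) => (by positivity : (0:ℝ) ≤ q ^ (i+1)))]
    _ = ∏ i ∈ F, Real.exp (-(q ^ (i + 1) / (1 - q))) := by
        rw [← Real.exp_sum]; congr 1; rw [← Finset.sum_neg_distrib]
    _ ≤ ∏ i ∈ F, (1 - q ^ (i + 1)) := by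
        apply Finset.prod_le_prod (fun i _ => (Real.exp_pos _).le)
        intro i _
        exact expFactor h0 h1 (by positivity) (by simpa using pow_le_pow_of_le_one h0 h1.le (Nat.le_add_left 1 i))

lemma hasProdFactors (h0 : 0 ≤ q) (h1 : q < 1) :
    HasProd (fun i : ℕ => 1 - q ^ (i + 1))
      (⨅ F : Finset ℕ, ∏ i ∈ F, (1 - q ^ (i + 1))) := by
  have hfac : ∀ i : ℕ, 0 ≤ 1 - q ^ (i + 1) := by
    intro i
    have : q ^ (i+1) ≤ 1 := pow_le_one₀ h0 h1.le
    linarith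
  have hanti : Antitone (fun F : Finset ℕ => ∏ i ∈ F, (1 - q ^ (i + 1))) := by
    intro F G hFG
    simp only
    rw [← Finset.prod_sdiff hFG]
    have h2 : ∏ i ∈ G \ F, (1 - q ^ (i + 1)) ≤ 1 :=
      Finset.prod_le_one (fun i _ => hfac i) (fun i _ => by
        have : (0:ℝ) ≤ q ^ (i+1) := by positivity
        linarith)
    have h3 : 0 ≤ ∏ i ∈ F, (1 - q ^ (i + 1)) := Finset.prod_nonneg (fun i _ => hfac i)
    nlinarith [h3, h2, Finset.prod_nonneg (fun i (_ : i ∈ G \ F) => hfac i)]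
  have hbdd : BddBelow (Set.range (fun F : Finset ℕ => ∏ i ∈ F, (1 - q ^ (i + 1)))) := by
    refine ⟨0, ?_⟩
    rintro x ⟨F, rfl⟩
    exact Finset.prod_nonneg (fun i _ => hfac i)
  exact tendsto_atTop_ciInf hanti hbdd


variable {n : ℕ}

/-- number of elements of `S` strictly below `x`. -/
def rk (S : Finset (Fin n)) (x : Fin n) : ℕ := (S.filter fun y => y < x).card

lemma cardLt (m : ℕ) (hm : m ≤ n) : (univ.filter fun v : Fin n => (v : ℕ) < m).card = m := by
  refine Eq.trans (Finset.card_bij' (fun (v : Fin n) (_ : v ∈ univ.filter fun v : Fin n => (v : ℕ) < m) => (v : ℕ))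
    (fun (i : ℕ) (hi : i ∈ Finset.range m) => (⟨i, lt_of_lt_of_le (Finset.mem_range.mp hi) hm⟩ : Fin n))
    ?_ ?_ ?_ ?_) (Finset.card_range m)
  · intro a ha; simp only [mem_filter, mem_univ, true_and] at ha; exact Finset.mem_range.mpr ha
  · intro i hi; simp [Finset.mem_range.mp hi]
  · intro a _; simp
  · intro i _; simp

lemma rk_lt_of_mem {S : Finset (Fin n)} {x : Fin n} (hx : x ∈ S) : rk S x < S.card := by
  apply Finset.card_lt_card
  constructor
  · exact Finset.filter_subset _ _
  · intro hsub
    have := hsub hx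
    simp at this

lemma rk_le_card (S : Finset (Fin n)) (x : Fin n) : rk S x ≤ S.card :=
  Finset.card_le_card (Finset.filter_subset _ _)

lemma rk_strictMono {S : Finset (Fin n)} {x y : Fin n} (hx : x ∈ S) (hxy : x < y) :
    rk S x < rk S y := by
  apply Finset.card_lt_card
  constructor
  · intro z hz
    simp only [mem_filter] at hz ⊢
    exact ⟨hz.1, lt_trans hz.2 hxy⟩
  · intro hsub
    have := hsub (Finset.mem_filter.mpr ⟨hx, hxy⟩)
    simp at this

lemma rk_le (S : Finset (Fin n)) (x : Fin n) : rk S x ≤ (x : ℕ) := by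
  have h1 : S.filter (fun y => y < x) ⊆ univ.filter (fun v : Fin n => (v : ℕ) < (x : ℕ)) := by
    intro z hz
    simp only [mem_filter, mem_univ, true_and] at hz ⊢
    exact hz.2
  have h2 := Finset.card_le_card h1
  rwa [cardLt (x : ℕ) x.2.le] at h2

lemma rk_add_compl (S : Finset (Fin n)) (x : Fin n) : rk S x + rk Sᶜ x = (x : ℕ) := by
  classical
  have h1 : S.filter (fun y => y < x) =
      (univ.filter (fun v : Fin n => (v : ℕ) < (x : ℕ))).filter (fun y => y ∈ S) := by
    ext z; simp only [mem_filter, mem_univ, true_and]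
    exact ⟨fun h => ⟨h.2, h.1⟩, fun h => ⟨h.2, h.1⟩⟩
  have h2 : Sᶜ.filter (fun y => y < x) =
      (univ.filter (fun v : Fin n => (v : ℕ) < (x : ℕ))).filter (fun y => ¬ y ∈ S) := by
    ext z; simp only [mem_filter, mem_univ, true_and, Finset.mem_compl]
    exact ⟨fun h => ⟨h.2, h.1⟩, fun h => ⟨h.2, h.1⟩⟩
  unfold rk
  rw [h1, h2, Finset.card_filter_add_card_filter_not, cardLt (x : ℕ) x.2.le]

lemma rk_split_of_not_mem {S : Finset (Fin n)} {x : Fin n} (hx : x ∉ S) :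
    rk S x + (S.filter fun y => x < y).card = S.card := by
  unfold rk
  have h2 : S.filter (fun y => x < y) = S.filter (fun y => ¬ y < x) := by
    apply Finset.filter_congr
    intro y hy
    simp only [not_lt]
    constructor
    · exact fun h => h.le
    · intro h
      rcases lt_or_eq_of_le h with h' | h'
      · exact h'
      · exact absurd (h' ▸ hy) hx
  rw [h2, Finset.card_filter_add_card_filter_not]

variable {k : ℕ}

lemma sortBound (S : Finset (Fin n)) (hS : S.card = k) (hkn : k ≤ n) (x : Fin n) :
    (if x ∈ S then rk S x else k + rk Sᶜ x) < n := by
  have hcompl : Sᶜ.card = n - k := by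
    rw [Finset.card_compl, hS, Fintype.card_fin]
  split_ifs with h
  · exact lt_of_lt_of_le (hS ▸ rk_lt_of_mem h) hkn
  · have h1 : rk Sᶜ x < n - k := hcompl ▸ rk_lt_of_mem (Finset.mem_compl.mpr h)
    omega

/-- the stable sorting permutation: sends old position `x` to its new position. -/
noncomputable def sortPerm (S : Finset (Fin n)) (hS : S.card = k) (hkn : k ≤ n) :
    Equiv.Perm (Fin n) := by
  classical
  refine Equiv.ofBijective (fun x => ⟨if x ∈ S then rk S x else k + rk Sᶜ x, sortBound S hS hkn x⟩) ?_
  rw [Fintype.bijective_iff_injective_and_card]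
  refine ⟨?_, rfl⟩
  intro x y hxy
  simp only [Fin.mk.injEq] at hxy
  by_contra hne
  have key : ∀ a b : Fin n, a < b →
      (if a ∈ S then rk S a else k + rk Sᶜ a) ≠ (if b ∈ S then rk S b else k + rk Sᶜ b) := by
    intro a b hlt
    by_cases haS : a ∈ S <;> by_cases hbS : b ∈ S
    · rw [if_pos haS, if_pos hbS]
      exact Nat.ne_of_lt (rk_strictMono haS hlt)
    · rw [if_pos haS, if_neg hbS]
      have := hS ▸ rk_lt_of_mem haS
      omega
    · rw [if_neg haS, if_pos hbS]
      have := hS ▸ rk_lt_of_mem hbS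
      omega
    · rw [if_neg haS, if_neg hbS]
      have := rk_strictMono (Finset.mem_compl.mpr haS) hlt
      omega
  rcases lt_trichotomy x y with h | h | h
  · exact key x y h hxy
  · exact hne h
  · exact key y x h hxy.symm

lemma sortPerm_apply (S : Finset (Fin n)) (hS : S.card = k) (hkn : k ≤ n) (x : Fin n) :
    (sortPerm S hS hkn x : ℕ) = if x ∈ S then rk S x else k + rk Sᶜ x := rfl

lemma sortPerm_lt_iff (S : Finset (Fin n)) (hS : S.card = k) (hkn : k ≤ n) (x : Fin n) :
    (sortPerm S hS hkn x : ℕ) < k ↔ x ∈ S := by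
  rw [sortPerm_apply]
  split_ifs with h
  · simp [h, hS ▸ rk_lt_of_mem h]
  · simp [h]

lemma sortPerm_mono_mem (S : Finset (Fin n)) (hS : S.card = k) (hkn : k ≤ n) {x y : Fin n}
    (hx : x ∈ S) (hy : y ∈ S) (hxy : x < y) :
    sortPerm S hS hkn x < sortPerm S hS hkn y := by
  have := rk_strictMono hx hxy
  simp only [Fin.lt_def, sortPerm_apply, if_pos hx, if_pos hy]
  exact this

lemma sortPerm_mono_not_mem (S : Finset (Fin n)) (hS : S.card = k) (hkn : k ≤ n) {x y : Fin n}
    (hx : x ∉ S) (hy : y ∉ S) (hxy : x < y) :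
    sortPerm S hS hkn x < sortPerm S hS hkn y := by
  have := rk_strictMono (Finset.mem_compl.mpr hx) hxy
  simp only [Fin.lt_def, sortPerm_apply, if_neg hx, if_neg hy]
  omega

lemma sortPerm_le_of_mem (S : Finset (Fin n)) (hS : S.card = k) (hkn : k ≤ n) {x : Fin n}
    (hx : x ∈ S) : (sortPerm S hS hkn x : ℕ) ≤ (x : ℕ) := by
  rw [sortPerm_apply, if_pos hx]; exact rk_le S x

lemma sortPerm_ge_of_not_mem (S : Finset (Fin n)) (hS : S.card = k) (hkn : k ≤ n) {x : Fin n}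
    (hx : x ∉ S) : (x : ℕ) ≤ (sortPerm S hS hkn x : ℕ) := by
  rw [sortPerm_apply, if_neg hx]
  have h1 := rk_add_compl S x
  have h2 := rk_le_card S x
  rw [hS] at h2
  omega

lemma sortPerm_eq_sub (S : Finset (Fin n)) (hS : S.card = k) (hkn : k ≤ n) {x : Fin n}
    (hx : x ∈ S) :
    (sortPerm S hS hkn x : ℕ) + (Sᶜ.filter fun y => y < x).card = (x : ℕ) := by
  rw [sortPerm_apply, if_pos hx]
  exact rk_add_compl S x

lemma sortPerm_eq_add (S : Finset (Fin n)) (hS : S.card = k) (hkn : k ≤ n) {x : Fin n}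
    (hx : x ∉ S) :
    (sortPerm S hS hkn x : ℕ) = (x : ℕ) + (S.filter fun y => x < y).card := by
  rw [sortPerm_apply, if_neg hx]
  have h1 := rk_add_compl S x
  have h2 := rk_split_of_not_mem hx
  rw [hS] at h2
  omega

lemma countLem1 (S : Finset (Fin n)) (c : ℝ) (x : ℕ) (hcx : c ≤ x)
    (h : ∀ y ∈ S, c ≤ ((y : ℕ) : ℝ) ∧ (y : ℕ) < x) : (S.card : ℝ) ≤ x - c := by
  by_cases hc : c ≤ 0
  · have h1 : S.card ≤ (Finset.range x).card := by
      apply Finset.card_le_card_of_injOn (fun y : Fin n => (y : ℕ))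
      · intro y hy; exact Finset.mem_range.mpr (h y hy).2
      · exact fun a _ b _ hab => Fin.val_injective hab
    rw [Finset.card_range] at h1
    have : (S.card : ℝ) ≤ x := Nat.cast_le.mpr h1
    linarith
  · push_neg at hc
    set m := ⌈c⌉₊ with hm
    have hmx : m ≤ x := Nat.ceil_le.mpr hcx
    have h1 : S.card ≤ (Finset.Ico m x).card := by
      apply Finset.card_le_card_of_injOn (fun y : Fin n => (y : ℕ))
      · intro y hy
        refine Finset.mem_Ico.mpr ⟨Nat.ceil_le.mpr (h y hy).1, (h y hy).2⟩
      · exact fun a _ b _ hab => Fin.val_injective hab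
    rw [Nat.card_Ico] at h1
    have h2 : (S.card : ℝ) ≤ ((x - m : ℕ) : ℝ) := Nat.cast_le.mpr h1
    rw [Nat.cast_sub hmx] at h2
    have h3 : c ≤ (m : ℝ) := Nat.le_ceil c
    linarith

lemma countLem2 (S : Finset (Fin n)) (c : ℝ) (x : ℕ) (hxc : (x : ℝ) ≤ c)
    (h : ∀ y ∈ S, x < (y : ℕ) ∧ ((y : ℕ) : ℝ) ≤ c) : (S.card : ℝ) ≤ c - x := by
  have hc0 : 0 ≤ c := le_trans (Nat.cast_nonneg x) hxc
  set m := ⌊c⌋₊ with hm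
  have hxm : x ≤ m := Nat.le_floor hxc
  have h1 : S.card ≤ (Finset.Ico (x + 1) (m + 1)).card := by
    apply Finset.card_le_card_of_injOn (fun y : Fin n => (y : ℕ))
    · intro y hy
      refine Finset.mem_Ico.mpr ⟨(h y hy).1, Nat.lt_succ_of_le (Nat.le_floor (h y hy).2)⟩
    · exact fun a _ b _ hab => Fin.val_injective hab
  rw [Nat.card_Ico] at h1
  have h2 : (S.card : ℝ) ≤ ((m + 1 - (x + 1) : ℕ) : ℝ) := Nat.cast_le.mpr h1
  have h4 : m + 1 - (x + 1) = m - x := by omega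
  rw [h4, Nat.cast_sub hxm] at h2
  have h3 : (m : ℝ) ≤ c := Nat.floor_le hc0
  linarith


variable (n k) in
/-- positions holding small values -/
noncomputable def Tset (σ : Equiv.Perm (Fin n)) : Finset (Fin n) :=
  univ.filter fun x => (σ x : ℕ) < k

lemma mem_Tset (σ : Equiv.Perm (Fin n)) (x : Fin n) :
    x ∈ Tset n k σ ↔ (σ x : ℕ) < k := by simp [Tset]

lemma Tset_card (σ : Equiv.Perm (Fin n)) (hkn : k ≤ n) : (Tset n k σ).card = k := by
  refine Eq.trans (Finset.card_nbij' σ σ.symm ?_ ?_ ?_ ?_) (cardLt k hkn)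
  · intro x hx; simp only [Finset.mem_coe, mem_Tset] at hx; simp [hx]
  · intro v hv; simp only [Finset.mem_coe, mem_filter, mem_univ, true_and] at hv; simp [mem_Tset, hv]
  · intro x _; simp
  · intro v _; simp

variable (n k) in
noncomputable def sortOf (σ : Equiv.Perm (Fin n)) (hkn : k ≤ n) : Equiv.Perm (Fin n) :=
  sortPerm (Tset n k σ) (Tset_card σ hkn) hkn

variable (n k) in
noncomputable def Phi (σ : Equiv.Perm (Fin n)) (hkn : k ≤ n) : Equiv.Perm (Fin n) :=
  (sortOf n k σ hkn).symm.trans σ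

lemma Phi_symm_apply (σ : Equiv.Perm (Fin n)) (hkn : k ≤ n) (v : Fin n) :
    (Phi n k σ hkn).symm v = sortOf n k σ hkn (σ.symm v) := by
  simp [Phi]

lemma Phi_eq (σ : Equiv.Perm (Fin n)) (hkn : k ≤ n) (t : Fin n) :
    Phi n k σ hkn t = σ ((sortOf n k σ hkn).symm t) := rfl

lemma Phi_lt_iff (σ : Equiv.Perm (Fin n)) (hkn : k ≤ n) (t : Fin n) :
    ((Phi n k σ hkn t : ℕ) < k) ↔ (t : ℕ) < k := by
  rw [Phi_eq, ← mem_Tset, ← sortPerm_lt_iff (Tset n k σ) (Tset_card σ hkn) hkn]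
  rw [show sortPerm (Tset n k σ) (Tset_card σ hkn) hkn ((sortOf n k σ hkn).symm t) = t from
    Equiv.apply_symm_apply _ t]

lemma Phi_symm_lt_iff (σ : Equiv.Perm (Fin n)) (hkn : k ≤ n) (v : Fin n) :
    (((Phi n k σ hkn).symm v : ℕ) < k) ↔ (v : ℕ) < k := by
  conv_rhs => rw [show v = Phi n k σ hkn ((Phi n k σ hkn).symm v) from (Equiv.apply_symm_apply _ v).symm]
  rw [Phi_lt_iff]

lemma Phi_disconnecting (σ : Equiv.Perm (Fin n)) (hkn : k ≤ n) :
    Disconnecting n (Phi n k σ hkn) k := by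
  unfold Disconnecting
  ext t
  simp only [Set.mem_image, Set.mem_setOf_eq]
  constructor
  · rintro ⟨s, hs, rfl⟩
    exact (Phi_lt_iff σ hkn s).mpr hs
  · intro ht
    exact ⟨(Phi n k σ hkn).symm t, (Phi_symm_lt_iff σ hkn t).mpr ht, Equiv.apply_symm_apply _ t⟩

lemma Phi_localized {ℓm ℓp : Fin n → ℝ} (hadm : IsAdmissible n ℓm ℓp)
    (σ : Equiv.Perm (Fin n)) (hσ : IsLocalized n ℓm ℓp σ) (hkn : k ≤ n) :
    IsLocalized n ℓm ℓp (Phi n k σ hkn) := by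
  intro v
  set x := σ.symm v with hx
  have hpos : (Phi n k σ hkn).symm v = sortPerm (Tset n k σ) (Tset_card σ hkn) hkn x :=
    Phi_symm_apply σ hkn v
  have hloc := hσ v
  rw [hpos]
  by_cases hv : (v : ℕ) < k
  · have hxT : x ∈ Tset n k σ := by rw [mem_Tset, hx]; simp [hv]
    constructor
    · have heq := sortPerm_eq_sub (Tset n k σ) (Tset_card σ hkn) hkn hxT
      have hcard : ((((Tset n k σ)ᶜ.filter fun y => y < x).card : ℕ) : ℝ) ≤
          ((x : ℕ) : ℝ) - (((v : ℕ) : ℝ) - ℓm v) := by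
        apply countLem1 _ _ (x : ℕ)
        · linarith [hloc.1]
        · intro y hy
          simp only [mem_filter, Finset.mem_compl, mem_Tset] at hy
          obtain ⟨hyT, hyx⟩ := hy
          have hky : k ≤ (σ y : ℕ) := by omega
          have hvlt : v < σ y := by rw [Fin.lt_def]; omega
          have hadm2 := (hadm.2 v (σ y) hvlt).1
          have hlocy := (hσ (σ y)).1
          rw [Equiv.symm_apply_apply] at hlocy
          exact ⟨by linarith, Fin.lt_def.mp hyx⟩
      have heqR := congrArg (fun m : ℕ => (m : ℝ)) heq
      push_cast at heqR
      linarith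
    · have h4 := sortPerm_le_of_mem (Tset n k σ) (Tset_card σ hkn) hkn hxT
      have h4R : ((sortPerm (Tset n k σ) (Tset_card σ hkn) hkn x : ℕ) : ℝ) ≤ ((x : ℕ) : ℝ) :=
        Nat.cast_le.mpr h4
      linarith [hloc.2]
  · have hxT : x ∉ Tset n k σ := by rw [mem_Tset, hx]; simp [hv]
    constructor
    · have h4 := sortPerm_ge_of_not_mem (Tset n k σ) (Tset_card σ hkn) hkn hxT
      have h4R : ((x : ℕ) : ℝ) ≤ ((sortPerm (Tset n k σ) (Tset_card σ hkn) hkn x : ℕ) : ℝ) :=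
        Nat.cast_le.mpr h4
      linarith [hloc.1]
    · have heq := sortPerm_eq_add (Tset n k σ) (Tset_card σ hkn) hkn hxT
      have hcard : ((((Tset n k σ).filter fun y => x < y).card : ℕ) : ℝ) ≤
          (((v : ℕ) : ℝ) + ℓp v) - ((x : ℕ) : ℝ) := by
        apply countLem2 _ _ (x : ℕ)
        · linarith [hloc.2]
        · intro y hy
          simp only [mem_filter, mem_Tset] at hy
          obtain ⟨hyT, hyx⟩ := hy
          have hvlt : σ y < v := by rw [Fin.lt_def]; omega
          have hadm2 := (hadm.2 (σ y) v hvlt).2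
          have hlocy := (hσ (σ y)).2
          rw [Equiv.symm_apply_apply] at hlocy
          exact ⟨Fin.lt_def.mp hyx, by linarith⟩
      have heqR := congrArg (fun m : ℕ => (m : ℝ)) heq
      push_cast at heqR
      linarith


variable (n) in
noncomputable def fpairs : Finset (Fin n × Fin n) :=
  Finset.univ.filter (fun x : Fin n × Fin n => x.1 < x.2)

lemma mem_fpairs (x : Fin n × Fin n) : x ∈ fpairs n ↔ x.1 < x.2 := by simp [fpairs]

lemma pairWeight_eq_valProd (p : Fin n → Fin n → ℝ) (σ : Equiv.Perm (Fin n)) :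
    pairWeight n p σ =
      ∏ ab ∈ fpairs n, (if σ.symm ab.1 < σ.symm ab.2 then p ab.1 ab.2 else p ab.2 ab.1) := by
  unfold pairWeight
  rw [show Finset.univ.filter (fun x : Fin n × Fin n => x.1 < x.2) = fpairs n from rfl]
  apply Finset.prod_nbij'
    (fun x : Fin n × Fin n => if σ x.1 < σ x.2 then (σ x.1, σ x.2) else (σ x.2, σ x.1))
    (fun ab : Fin n × Fin n =>
      if σ.symm ab.1 < σ.symm ab.2 then (σ.symm ab.1, σ.symm ab.2) else (σ.symm ab.2, σ.symm ab.1))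
  · intro x hx
    rw [mem_fpairs] at hx ⊢
    by_cases h : σ x.1 < σ x.2
    · simpa [h] using h
    · have hne : σ x.1 ≠ σ x.2 := fun he => absurd (σ.injective he) (ne_of_lt hx)
      have h2 : σ x.2 < σ x.1 := lt_of_le_of_ne (not_lt.mp h) (Ne.symm hne)
      simpa [h] using h2
  · intro ab hab
    rw [mem_fpairs] at hab ⊢
    by_cases h : σ.symm ab.1 < σ.symm ab.2
    · simpa [h] using h
    · have hne : σ.symm ab.1 ≠ σ.symm ab.2 := fun he => absurd (σ.symm.injective he) (ne_of_lt hab)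
      have h2 : σ.symm ab.2 < σ.symm ab.1 := lt_of_le_of_ne (not_lt.mp h) (Ne.symm hne)
      simpa [h] using h2
  · intro x hx
    rw [mem_fpairs] at hx
    by_cases h : σ x.1 < σ x.2
    · simp [h, hx]
    · have : ¬ σ.symm (σ x.2) < σ.symm (σ x.1) := by
        simp only [Equiv.symm_apply_apply]; exact not_lt.mpr hx.le
      simp [h, this]
      exact fun h' => absurd h' (not_lt.mpr hx.le)
  · intro ab hab
    rw [mem_fpairs] at hab
    by_cases h : σ.symm ab.1 < σ.symm ab.2
    · simp [h, hab]
    · have : ¬ σ (σ.symm ab.2) < σ (σ.symm ab.1) := by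
        simp only [Equiv.apply_symm_apply]; exact not_lt.mpr hab.le
      simp [h, this]
      exact fun h' => absurd h' (not_lt.mpr hab.le)
  · intro x hx
    rw [mem_fpairs] at hx
    by_cases h : σ x.1 < σ x.2
    · simp only [h, if_pos]
      have : σ.symm (σ x.1) < σ.symm (σ x.2) := by
        simp only [Equiv.symm_apply_apply]; exact hx
      simp [this]
      intro h'; exact absurd h' (not_le.mpr hx)
    · simp only [h, if_neg, if_false]
      have : ¬ σ.symm (σ x.2) < σ.symm (σ x.1) := by
        simp only [Equiv.symm_apply_apply]; exact not_lt.mpr hx.le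
      simp [this]
      intro h'; exact absurd h' (not_lt.mpr hx.le)

variable (n k) in
/-- inverted (small, large) value pairs of `σ` -/
noncomputable def NInv (σ : Equiv.Perm (Fin n)) : ℕ :=
  ((fpairs n).filter (fun ab =>
    (ab.1 : ℕ) < k ∧ k ≤ (ab.2 : ℕ) ∧ σ.symm ab.2 < σ.symm ab.1)).card

lemma sortPerm_lt_iff_of_mem (S : Finset (Fin n)) (hS : S.card = k) (hkn : k ≤ n) {x y : Fin n}
    (hx : x ∈ S) (hy : y ∈ S) :
    sortPerm S hS hkn x < sortPerm S hS hkn y ↔ x < y := by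
  constructor
  · intro h
    rcases lt_trichotomy x y with h' | h' | h'
    · exact h'
    · exact absurd (h' ▸ h) (lt_irrefl _)
    · exact absurd h (not_lt.mpr (sortPerm_mono_mem S hS hkn hy hx h').le)
  · exact sortPerm_mono_mem S hS hkn hx hy

lemma sortPerm_lt_iff_of_not_mem (S : Finset (Fin n)) (hS : S.card = k) (hkn : k ≤ n) {x y : Fin n}
    (hx : x ∉ S) (hy : y ∉ S) :
    sortPerm S hS hkn x < sortPerm S hS hkn y ↔ x < y := by
  constructor
  · intro h
    rcases lt_trichotomy x y with h' | h' | h'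
    · exact h'
    · exact absurd (h' ▸ h) (lt_irrefl _)
    · exact absurd h (not_lt.mpr (sortPerm_mono_not_mem S hS hkn hy hx h').le)
  · exact sortPerm_mono_not_mem S hS hkn hx hy

lemma sortPerm_ge_k (S : Finset (Fin n)) (hS : S.card = k) (hkn : k ≤ n) {x : Fin n}
    (hx : x ∉ S) : k ≤ (sortPerm S hS hkn x : ℕ) := by
  rw [sortPerm_apply, if_neg hx]; omega

lemma weight_ineq (ε : ℝ) (hε : 0 < ε) (p : Fin n → Fin n → ℝ) (hpos : ∀ i j : Fin n, 0 < p i j)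
    (hbias : ∀ i j : Fin n, i < j → 1 + ε ≤ p i j / p j i)
    (σ : Equiv.Perm (Fin n)) (hkn : k ≤ n) :
    (1 + ε) ^ (NInv n k σ) * pairWeight n p σ ≤ pairWeight n p (Phi n k σ hkn) := by
  rw [pairWeight_eq_valProd p σ, pairWeight_eq_valProd p (Phi n k σ hkn)]
  have hrw : (1 + ε) ^ (NInv n k σ) *
      ∏ ab ∈ fpairs n, (if σ.symm ab.1 < σ.symm ab.2 then p ab.1 ab.2 else p ab.2 ab.1) =
      ∏ ab ∈ fpairs n,
        ((if (ab.1 : ℕ) < k ∧ k ≤ (ab.2 : ℕ) ∧ σ.symm ab.2 < σ.symm ab.1 then (1 + ε) else 1) *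
          (if σ.symm ab.1 < σ.symm ab.2 then p ab.1 ab.2 else p ab.2 ab.1)) := by
    rw [Finset.prod_mul_distrib]
    congr 1
    rw [← Finset.prod_filter, Finset.prod_const, NInv]
  rw [hrw]
  apply Finset.prod_le_prod
  · intro ab _
    have h1 : (0:ℝ) < (if (ab.1 : ℕ) < k ∧ k ≤ (ab.2 : ℕ) ∧ σ.symm ab.2 < σ.symm ab.1
        then (1 + ε) else 1) := by split_ifs <;> linarith
    have h2 : (0:ℝ) < (if σ.symm ab.1 < σ.symm ab.2 then p ab.1 ab.2 else p ab.2 ab.1) := by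
      split_ifs <;> exact hpos _ _
    positivity
  · intro ab hab
    rw [mem_fpairs] at hab
    set a := ab.1
    set b := ab.2
    have hsymmA : (Phi n k σ hkn).symm a = sortPerm (Tset n k σ) (Tset_card σ hkn) hkn (σ.symm a) :=
      Phi_symm_apply σ hkn a
    have hsymmB : (Phi n k σ hkn).symm b = sortPerm (Tset n k σ) (Tset_card σ hkn) hkn (σ.symm b) :=
      Phi_symm_apply σ hkn b
    by_cases hbk : (b : ℕ) < k
    · -- both small
      have hak : (a : ℕ) < k := lt_trans (Fin.lt_def.mp hab) hbk
      have hmA : σ.symm a ∈ Tset n k σ := by rw [mem_Tset]; simp [hak]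
      have hmB : σ.symm b ∈ Tset n k σ := by rw [mem_Tset]; simp [hbk]
      have hiff : (Phi n k σ hkn).symm a < (Phi n k σ hkn).symm b ↔ σ.symm a < σ.symm b := by
        rw [hsymmA, hsymmB]
        exact sortPerm_lt_iff_of_mem _ _ hkn hmA hmB
      have hcond : ¬ ((a : ℕ) < k ∧ k ≤ (b : ℕ) ∧ σ.symm b < σ.symm a) := by
        intro h; omega
      rw [if_neg hcond, one_mul]
      by_cases h : σ.symm a < σ.symm b
      · rw [if_pos h, if_pos (hiff.mpr h)]
      · rw [if_neg h, if_neg (fun h' => h (hiff.mp h'))]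
    · -- b large
      by_cases hak : (a : ℕ) < k
      · -- mixed pair
        have hmA : σ.symm a ∈ Tset n k σ := by rw [mem_Tset]; simp [hak]
        have hmB : σ.symm b ∉ Tset n k σ := by rw [mem_Tset]; simp; omega
        have hPhi : (Phi n k σ hkn).symm a < (Phi n k σ hkn).symm b := by
          rw [hsymmA, hsymmB, Fin.lt_def]
          calc ((sortPerm (Tset n k σ) (Tset_card σ hkn) hkn (σ.symm a) : ℕ))
              < k := (sortPerm_lt_iff _ _ hkn _).mpr hmA
            _ ≤ _ := sortPerm_ge_k _ _ hkn hmB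
        rw [if_pos hPhi]
        by_cases h : σ.symm a < σ.symm b
        · have hcond : ¬ ((a : ℕ) < k ∧ k ≤ (b : ℕ) ∧ σ.symm b < σ.symm a) := by
            intro hc; exact absurd h (not_lt.mpr hc.2.2.le)
          rw [if_neg hcond, one_mul, if_pos h]
        · have hne : σ.symm b ≠ σ.symm a := fun he =>
            absurd (σ.symm.injective he) (ne_of_lt hab).symm
          have h2 : σ.symm b < σ.symm a := lt_of_le_of_ne (not_lt.mp h) hne
          have hcond : (a : ℕ) < k ∧ k ≤ (b : ℕ) ∧ σ.symm b < σ.symm a := ⟨hak, by omega, h2⟩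
          rw [if_pos hcond, if_neg h]
          have hb := hbias a b hab
          rw [le_div_iff₀ (hpos b a)] at hb
          linarith [hb]
      · -- both large
        have hmA : σ.symm a ∉ Tset n k σ := by rw [mem_Tset]; simp; omega
        have hmB : σ.symm b ∉ Tset n k σ := by rw [mem_Tset]; simp; omega
        have hiff : (Phi n k σ hkn).symm a < (Phi n k σ hkn).symm b ↔ σ.symm a < σ.symm b := by
          rw [hsymmA, hsymmB]
          exact sortPerm_lt_iff_of_not_mem _ _ hkn hmA hmB
        have hcond : ¬ ((a : ℕ) < k ∧ k ≤ (b : ℕ) ∧ σ.symm b < σ.symm a) := by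
          intro h; omega
        rw [if_neg hcond, one_mul]
        by_cases h : σ.symm a < σ.symm b
        · rw [if_pos h, if_pos (hiff.mpr h)]
        · rw [if_neg h, if_neg (fun h' => h (hiff.mp h'))]

variable (n) in
noncomputable def invT (T : Finset (Fin n)) : ℕ :=
  ((fpairs n).filter (fun xy => xy.1 ∉ T ∧ xy.2 ∈ T)).card

lemma NInv_eq_invT (σ : Equiv.Perm (Fin n)) : NInv n k σ = invT n (Tset n k σ) := by
  unfold NInv invT
  apply Finset.card_nbij' (fun ab => (σ.symm ab.2, σ.symm ab.1)) (fun xy => (σ xy.2, σ xy.1))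
  · intro ab hab
    simp only [Finset.mem_coe, mem_filter, mem_fpairs, mem_Tset, Equiv.apply_symm_apply] at hab ⊢
    exact ⟨hab.2.2.2, by omega, hab.2.1⟩
  · intro xy hxy
    simp only [Finset.mem_coe, mem_filter, mem_fpairs, mem_Tset, Equiv.symm_apply_apply] at hxy ⊢
    obtain ⟨hlt, hnT, hT⟩ := hxy
    refine ⟨?_, hT, by omega, hlt⟩
    rw [Fin.lt_def]
    have := Fin.lt_def.mp hlt
    omega
  · intro ab _; simp
  · intro xy _; simp

/-- the `m`-th smallest element of `T` -/
noncomputable def embT (T : Finset (Fin n)) : Fin T.card → Fin n := T.orderEmbOfFin rfl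

lemma embT_mem (T : Finset (Fin n)) (j : Fin T.card) : embT T j ∈ T :=
  Finset.orderEmbOfFin_mem T rfl j

lemma embT_surj (T : Finset (Fin n)) {z : Fin n} (hz : z ∈ T) : ∃ j, embT T j = z := by
  have : z ∈ Set.range (T.orderEmbOfFin rfl) := by
    rw [Finset.range_orderEmbOfFin]; exact hz
  exact this

lemma embT_rk_aux : True := trivial

lemma rk_embT (T : Finset (Fin n)) (j : Fin T.card) : rk T (embT T j) = (j : ℕ) := by
  unfold rk
  have himg : T.filter (fun z => z < embT T j) =
      Finset.image (fun i => embT T i) (univ.filter fun i : Fin T.card => i < j) := by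
    ext z
    simp only [mem_filter, Finset.mem_image, mem_univ, true_and]
    constructor
    · rintro ⟨hzT, hzlt⟩
      obtain ⟨i, hi⟩ := embT_surj T hzT
      refine ⟨i, ?_, hi⟩
      rw [← hi] at hzlt
      exact (OrderEmbedding.lt_iff_lt _).mp hzlt
    · rintro ⟨i, hij, rfl⟩
      exact ⟨embT_mem T i, (OrderEmbedding.lt_iff_lt _).mpr hij⟩
  have hinj : Function.Injective (fun i => embT T i) := fun a b h => (T.orderEmbOfFin rfl).injective h
  rw [himg, Finset.card_image_of_injective _ hinj]
  have h2 : (univ.filter fun i : Fin T.card => i < j) =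
      (univ.filter fun i : Fin T.card => (i : ℕ) < (j : ℕ)) := by
    apply Finset.filter_congr; intro i _; exact Fin.lt_def
  rw [h2, cardLt (n := T.card) (j : ℕ) j.2.le]

lemma embT_val (T : Finset (Fin n)) (j : Fin T.card) :
    (embT T j : ℕ) = rk Tᶜ (embT T j) + (j : ℕ) := by
  have := rk_add_compl T (embT T j)
  rw [rk_embT] at this
  omega

lemma embT_rk (T : Finset (Fin n)) {y : Fin n} (hy : y ∈ T) :
    embT T ⟨rk T y, rk_lt_of_mem hy⟩ = y := by
  obtain ⟨j, hj⟩ := embT_surj T hy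
  have hval : rk T y = (j : ℕ) := by rw [← hj, rk_embT]
  have h3 : (⟨rk T y, rk_lt_of_mem hy⟩ : Fin T.card) = j := Fin.ext hval
  rw [h3, hj]

/-- `AT T m` = number of non-elements of `T` below the `m`-th smallest element of `T`. -/
noncomputable def AT (T : Finset (Fin n)) (m : ℕ) : ℕ :=
  if h : m < T.card then rk Tᶜ (embT T ⟨m, h⟩) else 0

noncomputable def DT (T : Finset (Fin n)) (m : ℕ) : ℕ :=
  AT T m - (if m = 0 then 0 else AT T (m - 1))

lemma rk_mono (S : Finset (Fin n)) {x y : Fin n} (h : x ≤ y) : rk S x ≤ rk S y := by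
  apply Finset.card_le_card
  intro z hz
  simp only [mem_filter] at hz ⊢
  exact ⟨hz.1, lt_of_lt_of_le hz.2 h⟩

lemma AT_mono (T : Finset (Fin n)) {m m' : ℕ} (h : m ≤ m') (hm' : m' < T.card) :
    AT T m ≤ AT T m' := by
  have hm : m < T.card := lt_of_le_of_lt h hm'
  unfold AT
  rw [dif_pos hm, dif_pos hm']
  apply rk_mono
  exact (OrderEmbedding.le_iff_le _).mpr h

lemma AT_le (T : Finset (Fin n)) (m : ℕ) : AT T m ≤ n := by
  unfold AT
  split_ifs with h
  · exact le_trans (rk_le_card _ _) (le_trans (Finset.card_le_univ _) (by simp))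
  · omega

lemma DT_le (T : Finset (Fin n)) (m : ℕ) : DT T m ≤ n :=
  le_trans (Nat.sub_le _ _) (AT_le T m)

lemma DT_sum (T : Finset (Fin n)) : ∀ m, m < T.card →
    ∑ i ∈ Finset.range (m + 1), DT T i = AT T m := by
  intro m
  induction m with
  | zero => intro _; simp [DT]
  | succ m ih =>
    intro hm
    rw [Finset.sum_range_succ, ih (by omega)]
    have hmono := AT_mono T (by omega : m ≤ m + 1) hm
    have h2 : DT T (m + 1) = AT T (m + 1) - AT T m := by
      unfold DT; norm_num
    rw [h2]
    omega

lemma telescopeNat (K : ℕ) (A D : ℕ → ℕ) (hD : ∀ m < K, ∑ i ∈ Finset.range (m + 1), D i = A m) :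
    ∑ j ∈ Finset.range K, A j = ∑ j ∈ Finset.range K, (K - j) * D j := by
  calc ∑ j ∈ Finset.range K, A j
      = ∑ j ∈ Finset.range K, ∑ i ∈ Finset.range K, (if i ≤ j then D i else 0) := by
        apply Finset.sum_congr rfl
        intro j hj
        rw [← hD j (Finset.mem_range.mp hj), ← Finset.sum_filter]
        apply Finset.sum_congr ?_ (fun _ _ => rfl)
        ext i
        simp only [Finset.mem_filter, Finset.mem_range]
        have := Finset.mem_range.mp hj
        omega
    _ = ∑ i ∈ Finset.range K, ∑ j ∈ Finset.range K, (if i ≤ j then D i else 0) :=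
        Finset.sum_comm
    _ = ∑ j ∈ Finset.range K, (K - j) * D j := by
        apply Finset.sum_congr rfl
        intro i hi
        rw [← Finset.sum_filter]
        have : (Finset.range K).filter (fun j => i ≤ j) = Finset.Ico i K := by
          ext j
          simp only [Finset.mem_filter, Finset.mem_range, Finset.mem_Ico]
          omega
        rw [this, Finset.sum_const, Nat.card_Ico, smul_eq_mul]

lemma invT_eq_sum (T : Finset (Fin n)) :
    invT n T = ∑ i ∈ Finset.range T.card, AT T i := by
  have h1 : invT n T = ∑ y ∈ T, rk Tᶜ y := by
    unfold invT
    rw [Finset.card_eq_sum_card_fiberwise (f := Prod.snd) (t := T)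
      (fun xy hxy => (Finset.mem_filter.mp hxy).2.2)]
    apply Finset.sum_congr rfl
    intro y hy
    apply Finset.card_nbij' (fun xy => xy.1) (fun x => (x, y))
    · intro xy hxy
      simp only [Finset.mem_coe, mem_filter, mem_fpairs, Finset.mem_compl] at hxy ⊢
      obtain ⟨⟨hlt, hnT, _⟩, heq⟩ := hxy
      exact ⟨hnT, heq ▸ hlt⟩
    · intro x hx
      simp only [Finset.mem_coe, mem_filter, mem_fpairs, Finset.mem_compl] at hx ⊢
      exact ⟨⟨hx.2, hx.1, hy⟩, trivial⟩
    · intro xy hxy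
      simp only [Finset.mem_coe, mem_filter] at hxy
      exact Prod.ext rfl hxy.2.symm
    · intro x _; rfl
  rw [h1]
  have h2 : ∑ j : Fin T.card, rk Tᶜ (embT T j) = ∑ y ∈ T, rk Tᶜ y := by
    refine Finset.sum_bij' (fun (j : Fin T.card) (_ : j ∈ univ) => embT T j)
      (fun (y : Fin n) (hy : y ∈ T) => (⟨rk T y, rk_lt_of_mem hy⟩ : Fin T.card)) ?_ ?_ ?_ ?_ ?_
    · intro j _; exact embT_mem T j
    · intro y hy; exact mem_univ _
    · intro j _; exact Fin.ext (rk_embT T j)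
    · intro y hy; exact embT_rk T hy
    · intro j _; rfl
  calc ∑ y ∈ T, rk Tᶜ y = ∑ j : Fin T.card, rk Tᶜ (embT T j) := h2.symm
    _ = ∑ j : Fin T.card, AT T (j : ℕ) := by
        apply Finset.sum_congr rfl
        intro j _
        unfold AT
        rw [dif_pos j.2]
    _ = ∑ i ∈ Finset.range T.card, AT T i := Fin.sum_univ_eq_sum_range _ _

variable (k) in
noncomputable def FT (T : Finset (Fin n)) : Fin k → ℕ := fun j => DT T (j : ℕ)

lemma invT_eq_weighted (T : Finset (Fin n)) (hT : T.card = k) :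
    invT n T = ∑ j ∈ Finset.range k, (k - j) * DT T j := by
  rw [invT_eq_sum, hT]
  exact telescopeNat k (AT T) (DT T) (fun m hm => DT_sum T m (by omega))

lemma mem_iff_val (T : Finset (Fin n)) (hT : T.card = k) (z : Fin n) :
    z ∈ T ↔ ∃ m, ∃ _ : m < k, (z : ℕ) = AT T m + m := by
  constructor
  · intro hz
    obtain ⟨j, hj⟩ := embT_surj T hz
    refine ⟨(j : ℕ), by omega, ?_⟩
    have h2 : AT T (j : ℕ) = rk Tᶜ (embT T j) := by
      unfold AT
      rw [dif_pos (show (j : ℕ) < T.card from j.2)]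
    rw [← hj, embT_val, h2]
  · rintro ⟨m, hm, hval⟩
    have hmc : m < T.card := by omega
    have h2 := embT_val T ⟨m, hmc⟩
    have h3 : AT T m = rk Tᶜ (embT T ⟨m, hmc⟩) := by unfold AT; rw [dif_pos hmc]
    have hz : z = embT T ⟨m, hmc⟩ := Fin.ext (by rw [hval, h3]; rw [h2])
    rw [hz]; exact embT_mem T _

lemma FT_inj {T T' : Finset (Fin n)} (hT : T.card = k) (hT' : T'.card = k)
    (hF : FT k T = FT k T') : T = T' := by
  have hD : ∀ m, m < k → DT T m = DT T' m := by
    intro m hm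
    have := congrFun hF ⟨m, hm⟩
    simpa [FT] using this
  have hA : ∀ m, m < k → AT T m = AT T' m := by
    intro m hm
    rw [← DT_sum T m (by omega), ← DT_sum T' m (by omega)]
    apply Finset.sum_congr rfl
    intro i hi
    exact hD i (by have := Finset.mem_range.mp hi; omega)
  ext z
  rw [mem_iff_val T hT z, mem_iff_val T' hT' z]
  constructor <;> rintro ⟨m, hm, hv⟩
  · exact ⟨m, hm, by rw [hv, hA m hm]⟩
  · exact ⟨m, hm, by rw [hv, hA m hm]⟩

lemma geom_bound {r : ℝ} (hr0 : 0 ≤ r) (hr1 : r < 1) (M : ℕ) :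
    ∑ m ∈ Finset.range M, r ^ m ≤ (1 - r)⁻¹ := by
  have h := Summable.sum_le_tsum (Finset.range M) (fun i _ => by positivity)
    (summable_geometric_of_lt_one hr0 hr1)
  rwa [tsum_geometric_of_lt_one hr0 hr1] at h

lemma words_bound {q : ℝ} (hq0 : 0 ≤ q) (hq1 : q < 1) (hkn : k ≤ n) :
    ∑ T ∈ Finset.powersetCard k (univ : Finset (Fin n)), q ^ invT n T
      ≤ ∏ j ∈ Finset.range k, (1 - q ^ (j + 1))⁻¹ := by
  have hstep1 : ∀ T ∈ Finset.powersetCard k (univ : Finset (Fin n)),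
      q ^ invT n T = ∏ j : Fin k, (q ^ (k - (j : ℕ))) ^ (FT k T j) := by
    intro T hT
    obtain ⟨-, hTc⟩ := Finset.mem_powersetCard.mp hT
    rw [invT_eq_weighted T hTc, ← Finset.prod_pow_eq_pow_sum]
    rw [← Fin.prod_univ_eq_prod_range (fun j => q ^ ((k - j) * DT T j)) k]
    apply Finset.prod_congr rfl
    intro j _
    rw [pow_mul]
    rfl
  calc ∑ T ∈ Finset.powersetCard k (univ : Finset (Fin n)), q ^ invT n T
      = ∑ T ∈ Finset.powersetCard k (univ : Finset (Fin n)),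
          ∏ j : Fin k, (q ^ (k - (j : ℕ))) ^ (FT k T j) := Finset.sum_congr rfl hstep1
    _ = ∑ d ∈ (Finset.powersetCard k (univ : Finset (Fin n))).image (FT k),
          ∏ j : Fin k, (q ^ (k - (j : ℕ))) ^ (d j) := by
        rw [Finset.sum_image]
        intro T hT T' hT' hF
        exact FT_inj (Finset.mem_powersetCard.mp hT).2 (Finset.mem_powersetCard.mp hT').2 hF
    _ ≤ ∑ d ∈ Fintype.piFinset (fun _ : Fin k => Finset.range (n + 1)),
          ∏ j : Fin k, (q ^ (k - (j : ℕ))) ^ (d j) := by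
        apply Finset.sum_le_sum_of_subset_of_nonneg
        · intro d hd
          obtain ⟨T, _, rfl⟩ := Finset.mem_image.mp hd
          rw [Fintype.mem_piFinset]
          intro j
          rw [Finset.mem_range]
          exact Nat.lt_succ_of_le (DT_le T (j : ℕ))
        · intro d _ _
          apply Finset.prod_nonneg
          intro j _
          positivity
    _ = ∏ j : Fin k, ∑ m ∈ Finset.range (n + 1), (q ^ (k - (j : ℕ))) ^ m := by
        rw [Finset.prod_univ_sum]
    _ ≤ ∏ j : Fin k, (1 - q ^ (k - (j : ℕ)))⁻¹ := by
        apply Finset.prod_le_prod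
        · intro j _
          apply Finset.sum_nonneg
          intro m _
          positivity
        · intro j _
          apply geom_bound (by positivity)
          exact pow_lt_one₀ hq0 hq1 (by have := j.2; omega)
    _ = ∏ j ∈ Finset.range k, (1 - q ^ (j + 1))⁻¹ := by
        rw [Fin.prod_univ_eq_prod_range (fun m => (1 - q ^ (k - m))⁻¹) k]
        rw [← Finset.prod_range_reflect (fun m => (1 - q ^ (m + 1))⁻¹) k]
        apply Finset.prod_congr rfl
        intro j hj
        have hjk := Finset.mem_range.mp hj
        rw [show k - 1 - j + 1 = k - j from by omega]

lemma Phi_Tset_inj (σ σ' : Equiv.Perm (Fin n)) (hkn : k ≤ n)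
    (hT : Tset n k σ = Tset n k σ') (hP : Phi n k σ hkn = Phi n k σ' hkn) : σ = σ' := by
  have hsort : ∀ x, sortOf n k σ hkn x = sortOf n k σ' hkn x := by
    intro x
    apply Fin.ext
    rw [sortOf, sortOf, sortPerm_apply, sortPerm_apply, hT]
  ext x
  have h1 : σ x = Phi n k σ hkn (sortOf n k σ hkn x) := by
    rw [Phi_eq, Equiv.symm_apply_apply]
  rw [h1, hP, hsort, Phi_eq, Equiv.symm_apply_apply]

/-- under the ε-positively biased measure conditioned on an admissible
localization event, every position `k ∈ [n]` is disconnecting with probability at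
least `∏_{i=1}^∞ (1 − (1+ε)^{-i})`, a positive constant depending only on `ε`. -/
theorem stmt8 (n : ℕ) (ε : ℝ) (hε : 0 < ε)
    (p : Fin n → Fin n → ℝ) (hpos : ∀ i j : Fin n, 0 < p i j)
    (hbias : ∀ i j : Fin n, i < j → 1 + ε ≤ p i j / p j i)
    (ℓm ℓp : Fin n → ℝ) (hadm : IsAdmissible n ℓm ℓp)
    (hne : ∃ σ : Equiv.Perm (Fin n), IsLocalized n ℓm ℓp σ)
    (k : ℕ) (hk1 : 1 ≤ k) (hkn : k ≤ n) :
    0 < ∏' i : ℕ, (1 - (1 + ε)⁻¹ ^ (i + 1)) ∧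
    (∏' i : ℕ, (1 - (1 + ε)⁻¹ ^ (i + 1))) *
        ∑ σ ∈ Finset.univ.filter (fun σ : Equiv.Perm (Fin n) => IsLocalized n ℓm ℓp σ),
          pairWeight n p σ
      ≤ ∑ σ ∈ Finset.univ.filter (fun σ : Equiv.Perm (Fin n) =>
          IsLocalized n ℓm ℓp σ ∧ Disconnecting n σ k), pairWeight n p σ := by

  set q : ℝ := (1 + ε)⁻¹ with hqdef
  have hε1 : (1:ℝ) < 1 + ε := by linarith
  have hq0 : 0 ≤ q := by rw [hqdef]; positivity
  have hq1 : q < 1 := by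
    have h := inv_mul_cancel₀ (show (1:ℝ) + ε ≠ 0 by linarith)
    rw [← hqdef] at h
    nlinarith [hq0]
  have hp' := hasProdFactors hq0 hq1
  have heq := hp'.tprod_eq
  have hbdd : BddBelow (Set.range fun F : Finset ℕ => ∏ i ∈ F, (1 - q ^ (i + 1))) :=
    ⟨Real.exp (-(q / (1 - q) ^ 2)), by rintro x ⟨F, rfl⟩; exact prodLB hq0 hq1 F⟩
  have hCpos : 0 < ∏' i : ℕ, (1 - q ^ (i + 1)) := by
    rw [heq]
    exact lt_of_lt_of_le (Real.exp_pos _) (le_ciInf (fun F => prodLB hq0 hq1 F))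
  have hCleP : (∏' i : ℕ, (1 - q ^ (i + 1))) ≤ ∏ i ∈ Finset.range k, (1 - q ^ (i + 1)) := by
    rw [heq]; exact ciInf_le hbdd _
  refine ⟨hCpos, ?_⟩
  set P := ∏ i ∈ Finset.range k, (1 - q ^ (i + 1)) with hPdef
  have hfac : ∀ i : ℕ, 0 < 1 - q ^ (i + 1) := fun i => by
    have := pow_lt_one₀ hq0 hq1 (by omega : i + 1 ≠ 0); linarith
  have hPpos : 0 < P := Finset.prod_pos (fun i _ => hfac i)
  have hPinv : ∏ j ∈ Finset.range k, (1 - q ^ (j + 1))⁻¹ = P⁻¹ := Finset.prod_inv_distrib _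
  have hwnn : ∀ σ : Equiv.Perm (Fin n), 0 ≤ pairWeight n p σ := fun σ =>
    Finset.prod_nonneg (fun x _ => (hpos _ _).le)
  set Loc := Finset.univ.filter (fun σ : Equiv.Perm (Fin n) => IsLocalized n ℓm ℓp σ) with hLoc
  set D := Finset.univ.filter (fun σ : Equiv.Perm (Fin n) =>
    IsLocalized n ℓm ℓp σ ∧ Disconnecting n σ k) with hD
  have hmaps : ∀ σ ∈ Loc, Phi n k σ hkn ∈ D := by
    intro σ hσ
    rw [hLoc, Finset.mem_filter] at hσ
    rw [hD, Finset.mem_filter]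
    exact ⟨Finset.mem_univ _, Phi_localized hadm σ hσ.2 hkn, Phi_disconnecting σ hkn⟩
  have hkey : ∀ σ : Equiv.Perm (Fin n),
      pairWeight n p σ ≤ q ^ (NInv n k σ) * pairWeight n p (Phi n k σ hkn) := by
    intro σ
    have hw := weight_ineq ε hε p hpos hbias σ hkn
    have hqpow : q ^ (NInv n k σ) * (1 + ε) ^ (NInv n k σ) = 1 := by
      rw [hqdef, ← mul_pow, inv_mul_cancel₀ (by linarith : (1:ℝ) + ε ≠ 0), one_pow]
    calc pairWeight n p σ
        = q ^ (NInv n k σ) * ((1 + ε) ^ (NInv n k σ) * pairWeight n p σ) := by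
          rw [← mul_assoc, hqpow, one_mul]
      _ ≤ q ^ (NInv n k σ) * pairWeight n p (Phi n k σ hkn) :=
          mul_le_mul_of_nonneg_left hw (by positivity)
  have hfiber : ∀ τ : Equiv.Perm (Fin n),
      ∑ σ ∈ Loc.filter (fun σ => Phi n k σ hkn = τ), q ^ (NInv n k σ) ≤ P⁻¹ := by
    intro τ
    rw [← hPinv]
    calc ∑ σ ∈ Loc.filter (fun σ => Phi n k σ hkn = τ), q ^ (NInv n k σ)
        = ∑ σ ∈ Loc.filter (fun σ => Phi n k σ hkn = τ), q ^ (invT n (Tset n k σ)) :=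
          Finset.sum_congr rfl (fun σ _ => by rw [NInv_eq_invT])
      _ = ∑ T ∈ (Loc.filter (fun σ => Phi n k σ hkn = τ)).image (Tset n k),
            q ^ invT n T := by
          rw [Finset.sum_image]
          intro σ hσ σ' hσ' hT
          rw [Finset.mem_coe, Finset.mem_filter] at hσ hσ'
          exact Phi_Tset_inj σ σ' hkn hT (hσ.2.trans hσ'.2.symm)
      _ ≤ ∑ T ∈ Finset.powersetCard k (univ : Finset (Fin n)), q ^ invT n T := by
          apply Finset.sum_le_sum_of_subset_of_nonneg
          · intro T hT
            obtain ⟨σ, _, rfl⟩ := Finset.mem_image.mp hT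
            rw [Finset.mem_powersetCard]
            exact ⟨Finset.subset_univ _, Tset_card σ hkn⟩
          · intro T _ _; positivity
      _ ≤ ∏ j ∈ Finset.range k, (1 - q ^ (j + 1))⁻¹ := words_bound hq0 hq1 hkn
  calc (∏' i : ℕ, (1 - q ^ (i + 1))) * ∑ σ ∈ Loc, pairWeight n p σ
      ≤ P * ∑ σ ∈ Loc, pairWeight n p σ :=
        mul_le_mul_of_nonneg_right hCleP (Finset.sum_nonneg (fun σ _ => hwnn σ))
    _ ≤ P * ∑ σ ∈ Loc, q ^ (NInv n k σ) * pairWeight n p (Phi n k σ hkn) :=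
        mul_le_mul_of_nonneg_left (Finset.sum_le_sum (fun σ _ => hkey σ)) hPpos.le
    _ = ∑ σ ∈ Loc, P * (q ^ (NInv n k σ) * pairWeight n p (Phi n k σ hkn)) := by
        rw [Finset.mul_sum]
    _ = ∑ τ ∈ D, ∑ σ ∈ Loc.filter (fun σ => Phi n k σ hkn = τ),
          P * (q ^ (NInv n k σ) * pairWeight n p (Phi n k σ hkn)) :=
        (Finset.sum_fiberwise_of_maps_to hmaps _).symm
    _ ≤ ∑ τ ∈ D, pairWeight n p τ := by
        apply Finset.sum_le_sum
        intro τ hτ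
        have hinner : ∑ σ ∈ Loc.filter (fun σ => Phi n k σ hkn = τ),
            P * (q ^ (NInv n k σ) * pairWeight n p (Phi n k σ hkn))
            = P * pairWeight n p τ *
                ∑ σ ∈ Loc.filter (fun σ => Phi n k σ hkn = τ), q ^ (NInv n k σ) := by
          rw [Finset.mul_sum]
          apply Finset.sum_congr rfl
          intro σ hσ
          rw [Finset.mem_filter] at hσ
          rw [hσ.2]
          ring
        rw [hinner]
        calc P * pairWeight n p τ *
              ∑ σ ∈ Loc.filter (fun σ => Phi n k σ hkn = τ), q ^ (NInv n k σ)
            ≤ P * pairWeight n p τ * P⁻¹ :=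
              mul_le_mul_of_nonneg_left (hfiber τ) (mul_nonneg hPpos.le (hwnn τ))
          _ = pairWeight n p τ := by
              rw [mul_comm P _, mul_assoc, mul_inv_cancel₀ hPpos.ne', mul_one]
end

section
/- Let σ, σ̄ ∈ S_n and suppose a position k is disconnecting for both, i.e., σ({1,…,k}) = σ̄({1,…,k}) = {1,…,k} as unordered sets. Then the conditional distributions induced by μ on the positions {k+1,…,n} given σ restricted to {1,…,k}, and given σ̄ restricted to {1,…,k}, are equal: for any assignment τ of the particles {k+1,…,n} to positions {k+1,…,n}, μ(σ' agrees with τ on {k+1,…,n} | σ'({1,…,k}) = σ({1,…,k}) as an ordered tuple) is the same for σ and σ̄. -/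
set_option maxRecDepth 4000

open Finset
open scoped Classical

section Aux

variable {n k : ℕ}

lemma disc_lt_iff {σ : Equiv.Perm (Fin n)} (hσ : Disconnecting n σ k) (t : Fin n) :
    ((σ t : ℕ) < k ↔ (t : ℕ) < k) := by
  constructor
  · intro h
    have hm : σ t ∈ {t : Fin n | (t : ℕ) < k} := h
    rw [← hσ] at hm
    obtain ⟨s, hs, hst⟩ := hm
    have : s = t := σ.injective hst
    rwa [← this]
  · intro h
    have hm : σ t ∈ (fun t => σ t) '' {t : Fin n | (t : ℕ) < k} := ⟨t, h, rfl⟩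
    rw [hσ] at hm
    exact hm

lemma class_lt_iff {σ σ' : Equiv.Perm (Fin n)}
    (hl : ∀ t : Fin n, ((σ t : ℕ) < k ↔ (t : ℕ) < k))
    (h1 : ∀ t : Fin n, (t : ℕ) < k → σ' t = σ t) (t : Fin n) :
    ((σ' t : ℕ) < k ↔ (t : ℕ) < k) := by
  constructor
  · intro h
    set s := σ.symm (σ' t) with hs
    have hsk : (s : ℕ) < k := by
      have := (hl s).mp (by rwa [hs, Equiv.apply_symm_apply])
      exact this
    have : σ' s = σ' t := by
      rw [h1 s hsk, hs, Equiv.apply_symm_apply]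
    have hst : s = t := σ'.injective this
    rwa [← hst]
  · intro h
    rw [h1 t h]; exact (hl t).mpr h

lemma prod_perm_filter (σ' : Equiv.Perm (Fin n)) (q : Fin n → Prop) [DecidablePred q]
    (h : ∀ t, q (σ' t) ↔ q t) (g : Fin n → ℝ) :
    ∏ t ∈ univ.filter (fun t => q t), g (σ' t) = ∏ t ∈ univ.filter (fun t => q t), g t := by
  refine Finset.prod_nbij (fun t => σ' t) ?_ ?_ ?_ ?_
  · intro a ha
    simp only [mem_filter, mem_univ, true_and] at ha ⊢
    exact (h a).mpr ha
  · intro a _ b _ hab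
    exact σ'.injective hab
  · intro b hb
    simp only [Finset.coe_filter, Set.mem_setOf_eq, mem_univ, true_and] at hb
    refine ⟨σ'.symm b, ?_, ?_⟩
    · simp only [Finset.coe_filter, Set.mem_setOf_eq, mem_univ, true_and]
      exact (h (σ'.symm b)).mp (by rwa [Equiv.apply_symm_apply])
    · exact Equiv.apply_symm_apply σ' b
  · intro a _; rfl

lemma pairWeight_decomp (p : Fin n → Fin n → ℝ) (σ' : Equiv.Perm (Fin n)) :
    pairWeight n p σ' =
      (∏ x ∈ univ.filter (fun x : Fin n × Fin n => x.1 < x.2 ∧ (x.2 : ℕ) < k),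
          p (σ' x.1) (σ' x.2)) *
      ((∏ x ∈ univ.filter (fun x : Fin n × Fin n => (x.1 : ℕ) < k ∧ k ≤ (x.2 : ℕ)),
          p (σ' x.1) (σ' x.2)) *
       (∏ x ∈ univ.filter (fun x : Fin n × Fin n => x.1 < x.2 ∧ k ≤ (x.1 : ℕ)),
          p (σ' x.1) (σ' x.2))) := by
  rw [pairWeight,
    ← Finset.prod_filter_mul_prod_filter_not
      (univ.filter (fun x : Fin n × Fin n => x.1 < x.2)) (fun x => (x.2 : ℕ) < k),
    ← Finset.prod_filter_mul_prod_filter_not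
      ((univ.filter (fun x : Fin n × Fin n => x.1 < x.2)).filter (fun x => ¬ (x.2 : ℕ) < k))
      (fun x => (x.1 : ℕ) < k)]
  congr 1
  · apply Finset.prod_congr _ (fun _ _ => rfl)
    ext x; simp only [mem_filter, mem_univ, true_and, Fin.lt_def, not_lt]; try omega
  congr 1
  · apply Finset.prod_congr _ (fun _ _ => rfl)
    ext x; simp only [mem_filter, mem_univ, true_and, Fin.lt_def, not_lt]; try omega
  · apply Finset.prod_congr _ (fun _ _ => rfl)
    ext x; simp only [mem_filter, mem_univ, true_and, Fin.lt_def, not_lt]; try omega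

end Aux

section Aux2

variable {n k : ℕ}

lemma head_congr (p : Fin n → Fin n → ℝ) {σ σ' : Equiv.Perm (Fin n)}
    (h1 : ∀ t : Fin n, (t : ℕ) < k → σ' t = σ t) :
    ∏ x ∈ univ.filter (fun x : Fin n × Fin n => x.1 < x.2 ∧ (x.2 : ℕ) < k),
        p (σ' x.1) (σ' x.2)
    = ∏ x ∈ univ.filter (fun x : Fin n × Fin n => x.1 < x.2 ∧ (x.2 : ℕ) < k),
        p (σ x.1) (σ x.2) := by
  refine Finset.prod_congr rfl (fun x hx => ?_)
  simp only [mem_filter, mem_univ, true_and, Fin.lt_def] at hx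
  rw [h1 x.1 (by omega), h1 x.2 (by omega)]

lemma tail_congr (p : Fin n → Fin n → ℝ) {σ' σ'' : Equiv.Perm (Fin n)}
    (h3 : ∀ t : Fin n, k ≤ (t : ℕ) → σ'' t = σ' t) :
    ∏ x ∈ univ.filter (fun x : Fin n × Fin n => x.1 < x.2 ∧ k ≤ (x.1 : ℕ)),
        p (σ'' x.1) (σ'' x.2)
    = ∏ x ∈ univ.filter (fun x : Fin n × Fin n => x.1 < x.2 ∧ k ≤ (x.1 : ℕ)),
        p (σ' x.1) (σ' x.2) := by
  refine Finset.prod_congr rfl (fun x hx => ?_)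
  simp only [mem_filter, mem_univ, true_and, Fin.lt_def] at hx
  rw [h3 x.1 (by omega), h3 x.2 (by omega)]

lemma cross_eq (p : Fin n → Fin n → ℝ) {σ' : Equiv.Perm (Fin n)}
    (h : ∀ t : Fin n, ((σ' t : ℕ) < k ↔ (t : ℕ) < k)) :
    ∏ x ∈ univ.filter (fun x : Fin n × Fin n => (x.1 : ℕ) < k ∧ k ≤ (x.2 : ℕ)),
        p (σ' x.1) (σ' x.2)
    = ∏ u ∈ univ.filter (fun u : Fin n => (u : ℕ) < k),
        ∏ v ∈ univ.filter (fun v : Fin n => k ≤ (v : ℕ)), p u v := by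
  have hset : univ.filter (fun x : Fin n × Fin n => (x.1 : ℕ) < k ∧ k ≤ (x.2 : ℕ))
      = (univ.filter (fun u : Fin n => (u : ℕ) < k)) ×ˢ
        (univ.filter (fun v : Fin n => k ≤ (v : ℕ))) := by
    ext x
    simp only [mem_filter, mem_univ, true_and, Finset.mem_product]
  rw [hset, Finset.prod_product]
  have hge : ∀ t : Fin n, (k ≤ ((σ' t : Fin n) : ℕ) ↔ k ≤ (t : ℕ)) := by
    intro t
    rw [← not_lt, ← not_lt]
    exact not_congr (h t)
  have hinner : ∀ u : Fin n,
      ∏ v ∈ univ.filter (fun v : Fin n => k ≤ (v : ℕ)), p (σ' u) (σ' v)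
      = ∏ v ∈ univ.filter (fun v : Fin n => k ≤ (v : ℕ)), p (σ' u) v :=
    fun u => prod_perm_filter σ' (fun v => k ≤ (v : ℕ)) hge (fun v => p (σ' u) v)
  calc ∏ u ∈ univ.filter (fun u : Fin n => (u : ℕ) < k),
          ∏ v ∈ univ.filter (fun v : Fin n => k ≤ (v : ℕ)), p (σ' u) (σ' v)
      = ∏ u ∈ univ.filter (fun u : Fin n => (u : ℕ) < k),
          ∏ v ∈ univ.filter (fun v : Fin n => k ≤ (v : ℕ)), p (σ' u) v :=
        Finset.prod_congr rfl (fun u _ => hinner u)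
    _ = ∏ u ∈ univ.filter (fun u : Fin n => (u : ℕ) < k),
          ∏ v ∈ univ.filter (fun v : Fin n => k ≤ (v : ℕ)), p u v :=
        prod_perm_filter σ' (fun u => (u : ℕ) < k) h
          (fun u => ∏ v ∈ univ.filter (fun v : Fin n => k ≤ (v : ℕ)), p u v)

lemma weight_rel (p : Fin n → Fin n → ℝ) {σ σb σ' σ'' : Equiv.Perm (Fin n)}
    (hl : ∀ t : Fin n, ((σ t : ℕ) < k ↔ (t : ℕ) < k))
    (hlb : ∀ t : Fin n, ((σb t : ℕ) < k ↔ (t : ℕ) < k))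
    (h1 : ∀ t : Fin n, (t : ℕ) < k → σ' t = σ t)
    (h2 : ∀ t : Fin n, (t : ℕ) < k → σ'' t = σb t)
    (h3 : ∀ t : Fin n, k ≤ (t : ℕ) → σ'' t = σ' t) :
    (∏ x ∈ univ.filter (fun x : Fin n × Fin n => x.1 < x.2 ∧ (x.2 : ℕ) < k),
        p (σb x.1) (σb x.2)) * pairWeight n p σ'
    = (∏ x ∈ univ.filter (fun x : Fin n × Fin n => x.1 < x.2 ∧ (x.2 : ℕ) < k),
        p (σ x.1) (σ x.2)) * pairWeight n p σ'' := by
  rw [pairWeight_decomp (k := k) p σ', pairWeight_decomp (k := k) p σ'',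
    head_congr p h1, head_congr p h2,
    cross_eq p (class_lt_iff hl h1), cross_eq p (class_lt_iff hlb h2),
    tail_congr p h3]
  ring

end Aux2

theorem Equiv.Perm.apply_inv_self {α : Type*} (f : Equiv.Perm α) (x : α) : f (f⁻¹ x) = x :=
  f.apply_symm_apply x

section Aux3

variable {n k : ℕ}

noncomputable def fixPerm (σ : Equiv.Perm (Fin n))
    (h : ∀ t : Fin n, ((σ t : ℕ) < k ↔ (t : ℕ) < k)) : Equiv.Perm (Fin n) :=
  Equiv.Perm.subtypeCongr (σ.subtypePerm (fun t => h t))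
    (1 : Equiv.Perm {t : Fin n // ¬ (t : ℕ) < k})

lemma fixPerm_lt {σ : Equiv.Perm (Fin n)} (h : ∀ t : Fin n, ((σ t : ℕ) < k ↔ (t : ℕ) < k))
    {t : Fin n} (ht : (t : ℕ) < k) : fixPerm σ h t = σ t := by
  rw [fixPerm, Equiv.Perm.subtypeCongr.apply, dif_pos ht]
  rfl

lemma fixPerm_ge {σ : Equiv.Perm (Fin n)} (h : ∀ t : Fin n, ((σ t : ℕ) < k ↔ (t : ℕ) < k))
    {t : Fin n} (ht : ¬ (t : ℕ) < k) : fixPerm σ h t = t := by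
  rw [fixPerm, Equiv.Perm.subtypeCongr.apply, dif_neg ht]
  rfl

lemma fixPerm_inv_lt {σ : Equiv.Perm (Fin n)} (h : ∀ t : Fin n, ((σ t : ℕ) < k ↔ (t : ℕ) < k))
    {t : Fin n} (ht : (t : ℕ) < k) : (fixPerm σ h)⁻¹ t = σ⁻¹ t := by
  apply (fixPerm σ h).injective
  rw [Equiv.Perm.apply_inv_self]
  have hs : ((σ⁻¹ t : Fin n) : ℕ) < k := by
    have := h (σ⁻¹ t)
    rw [Equiv.Perm.apply_inv_self] at this
    exact this.mp ht
  rw [fixPerm_lt h hs, Equiv.Perm.apply_inv_self]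

lemma fixPerm_inv_ge {σ : Equiv.Perm (Fin n)} (h : ∀ t : Fin n, ((σ t : ℕ) < k ↔ (t : ℕ) < k))
    {t : Fin n} (ht : ¬ (t : ℕ) < k) : (fixPerm σ h)⁻¹ t = t := by
  apply (fixPerm σ h).injective
  rw [Equiv.Perm.apply_inv_self, fixPerm_ge h ht]

lemma conj_lt {σ σb σ' : Equiv.Perm (Fin n)}
    (hl : ∀ t : Fin n, ((σ t : ℕ) < k ↔ (t : ℕ) < k))
    (hlb : ∀ t : Fin n, ((σb t : ℕ) < k ↔ (t : ℕ) < k))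
    (h1 : ∀ t : Fin n, (t : ℕ) < k → σ' t = σ t)
    {t : Fin n} (ht : (t : ℕ) < k) :
    (σ' * (fixPerm σ hl)⁻¹ * fixPerm σb hlb) t = σb t := by
  have hbk : ((σb t : Fin n) : ℕ) < k := (hlb t).mpr ht
  have hsk : ((σ⁻¹ (σb t) : Fin n) : ℕ) < k := by
    have := hl (σ⁻¹ (σb t))
    rw [Equiv.Perm.apply_inv_self] at this
    exact this.mp hbk
  rw [Equiv.Perm.mul_apply, Equiv.Perm.mul_apply, fixPerm_lt hlb ht,
    fixPerm_inv_lt hl hbk, h1 _ hsk, Equiv.Perm.apply_inv_self]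

lemma conj_ge {σ σb : Equiv.Perm (Fin n)} (σ' : Equiv.Perm (Fin n))
    (hl : ∀ t : Fin n, ((σ t : ℕ) < k ↔ (t : ℕ) < k))
    (hlb : ∀ t : Fin n, ((σb t : ℕ) < k ↔ (t : ℕ) < k))
    {t : Fin n} (ht : k ≤ (t : ℕ)) :
    (σ' * (fixPerm σ hl)⁻¹ * fixPerm σb hlb) t = σ' t := by
  rw [Equiv.Perm.mul_apply, Equiv.Perm.mul_apply, fixPerm_ge hlb (not_lt.mpr ht),
    fixPerm_inv_ge hl (not_lt.mpr ht)]

end Aux3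

section Aux4

variable {n k : ℕ}

lemma key_sum (p : Fin n → Fin n → ℝ) {σ σb : Equiv.Perm (Fin n)}
    (hl : ∀ t : Fin n, ((σ t : ℕ) < k ↔ (t : ℕ) < k))
    (hlb : ∀ t : Fin n, ((σb t : ℕ) < k ↔ (t : ℕ) < k))
    (Q : Equiv.Perm (Fin n) → Prop)
    (hQ : ∀ f g : Equiv.Perm (Fin n), (∀ t : Fin n, k ≤ (t : ℕ) → f t = g t) → (Q f ↔ Q g)) :
    (∏ x ∈ univ.filter (fun x : Fin n × Fin n => x.1 < x.2 ∧ (x.2 : ℕ) < k),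
        p (σb x.1) (σb x.2)) *
      ∑ σ' ∈ univ.filter (fun σ' : Equiv.Perm (Fin n) =>
        (∀ t : Fin n, (t : ℕ) < k → σ' t = σ t) ∧ Q σ'), pairWeight n p σ'
    = (∏ x ∈ univ.filter (fun x : Fin n × Fin n => x.1 < x.2 ∧ (x.2 : ℕ) < k),
        p (σ x.1) (σ x.2)) *
      ∑ σ' ∈ univ.filter (fun σ' : Equiv.Perm (Fin n) =>
        (∀ t : Fin n, (t : ℕ) < k → σ' t = σb t) ∧ Q σ'), pairWeight n p σ' := by
  rw [Finset.mul_sum, Finset.mul_sum]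
  refine Finset.sum_bij' (i := fun σ' _ => σ' * (fixPerm σ hl)⁻¹ * fixPerm σb hlb)
    (j := fun σ'' _ => σ'' * (fixPerm σb hlb)⁻¹ * fixPerm σ hl) ?_ ?_ ?_ ?_ ?_
  · intro σ' hσ'
    simp only [mem_filter, mem_univ, true_and] at hσ' ⊢
    obtain ⟨h1, hq⟩ := hσ'
    refine ⟨fun t ht => conj_lt hl hlb h1 ht, ?_⟩
    rw [hQ _ σ' (fun t ht => conj_ge σ' hl hlb ht)]
    exact hq
  · intro σ'' hσ''
    simp only [mem_filter, mem_univ, true_and] at hσ'' ⊢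
    obtain ⟨h2, hq⟩ := hσ''
    refine ⟨fun t ht => conj_lt hlb hl h2 ht, ?_⟩
    rw [hQ _ σ'' (fun t ht => conj_ge σ'' hlb hl ht)]
    exact hq
  · intro σ' _; group
  · intro σ'' _; group
  · intro σ' hσ'
    simp only [mem_filter, mem_univ, true_and] at hσ'
    obtain ⟨h1, _⟩ := hσ'
    exact weight_rel p hl hlb h1
      (fun t ht => conj_lt hl hlb h1 ht)
      (fun t ht => conj_ge σ' hl hlb ht)

end Aux4

section Aux5

variable {n k : ℕ}

lemma key_sum1 (p : Fin n → Fin n → ℝ) {σ σb : Equiv.Perm (Fin n)}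
    (hl : ∀ t : Fin n, ((σ t : ℕ) < k ↔ (t : ℕ) < k))
    (hlb : ∀ t : Fin n, ((σb t : ℕ) < k ↔ (t : ℕ) < k)) (τ : Fin n → Fin n) :
    (∏ x ∈ univ.filter (fun x : Fin n × Fin n => x.1 < x.2 ∧ (x.2 : ℕ) < k),
        p (σb x.1) (σb x.2)) *
      ∑ σ' ∈ Finset.univ.filter (fun σ' : Equiv.Perm (Fin n) =>
        (∀ t : Fin n, (t : ℕ) < k → σ' t = σ t) ∧
        (∀ t : Fin n, k ≤ (t : ℕ) → σ' t = τ t)), pairWeight n p σ'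
    = (∏ x ∈ univ.filter (fun x : Fin n × Fin n => x.1 < x.2 ∧ (x.2 : ℕ) < k),
        p (σ x.1) (σ x.2)) *
      ∑ σ' ∈ Finset.univ.filter (fun σ' : Equiv.Perm (Fin n) =>
        (∀ t : Fin n, (t : ℕ) < k → σ' t = σb t) ∧
        (∀ t : Fin n, k ≤ (t : ℕ) → σ' t = τ t)), pairWeight n p σ' := by
  rw [Finset.mul_sum, Finset.mul_sum]
  refine Finset.sum_bij' (i := fun σ' _ => σ' * (fixPerm σ hl)⁻¹ * fixPerm σb hlb)
    (j := fun σ'' _ => σ'' * (fixPerm σb hlb)⁻¹ * fixPerm σ hl) ?_ ?_ ?_ ?_ ?_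
  · intro σ' hσ'
    simp only [mem_filter, mem_univ, true_and] at hσ' ⊢
    obtain ⟨h1, hq⟩ := hσ'
    exact ⟨fun t ht => conj_lt hl hlb h1 ht,
      fun t ht => by rw [conj_ge σ' hl hlb ht]; exact hq t ht⟩
  · intro σ'' hσ''
    simp only [mem_filter, mem_univ, true_and] at hσ'' ⊢
    obtain ⟨h2, hq⟩ := hσ''
    exact ⟨fun t ht => conj_lt hlb hl h2 ht,
      fun t ht => by rw [conj_ge σ'' hlb hl ht]; exact hq t ht⟩
  · intro σ' _; group
  · intro σ'' _; group
  · intro σ' hσ'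
    simp only [mem_filter, mem_univ, true_and] at hσ'
    obtain ⟨h1, _⟩ := hσ'
    exact weight_rel p hl hlb h1
      (fun t ht => conj_lt hl hlb h1 ht)
      (fun t ht => conj_ge σ' hl hlb ht)

lemma key_sum2 (p : Fin n → Fin n → ℝ) {σ σb : Equiv.Perm (Fin n)}
    (hl : ∀ t : Fin n, ((σ t : ℕ) < k ↔ (t : ℕ) < k))
    (hlb : ∀ t : Fin n, ((σb t : ℕ) < k ↔ (t : ℕ) < k)) :
    (∏ x ∈ univ.filter (fun x : Fin n × Fin n => x.1 < x.2 ∧ (x.2 : ℕ) < k),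
        p (σb x.1) (σb x.2)) *
      ∑ σ' ∈ Finset.univ.filter (fun σ' : Equiv.Perm (Fin n) =>
        ∀ t : Fin n, (t : ℕ) < k → σ' t = σ t), pairWeight n p σ'
    = (∏ x ∈ univ.filter (fun x : Fin n × Fin n => x.1 < x.2 ∧ (x.2 : ℕ) < k),
        p (σ x.1) (σ x.2)) *
      ∑ σ' ∈ Finset.univ.filter (fun σ' : Equiv.Perm (Fin n) =>
        ∀ t : Fin n, (t : ℕ) < k → σ' t = σb t), pairWeight n p σ' := by
  rw [Finset.mul_sum, Finset.mul_sum]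
  refine Finset.sum_bij' (i := fun σ' _ => σ' * (fixPerm σ hl)⁻¹ * fixPerm σb hlb)
    (j := fun σ'' _ => σ'' * (fixPerm σb hlb)⁻¹ * fixPerm σ hl) ?_ ?_ ?_ ?_ ?_
  · intro σ' hσ'
    simp only [mem_filter, mem_univ, true_and] at hσ' ⊢
    exact fun t ht => conj_lt hl hlb hσ' ht
  · intro σ'' hσ''
    simp only [mem_filter, mem_univ, true_and] at hσ'' ⊢
    exact fun t ht => conj_lt hlb hl hσ'' ht
  · intro σ' _; group
  · intro σ'' _; group
  · intro σ' hσ'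
    simp only [mem_filter, mem_univ, true_and] at hσ'
    exact weight_rel p hl hlb hσ'
      (fun t ht => conj_lt hl hlb hσ' ht)
      (fun t ht => conj_ge σ' hl hlb ht)

end Aux5

/-- if position `k` is disconnecting for both `σ` and `σ̄`, then the
conditional distributions induced by `μ` on the positions `{k+1,…,n}` given the
ordered tuple `σ` (resp. `σ̄`) on the first `k` positions coincide.  Stated in
cross-multiplied form with unnormalized weights: for any assignment `τ` of particles
to the positions beyond `k`,
`μ(agrees with σ on [k] and τ beyond) · μ(agrees with σ̄ on [k])
  = μ(agrees with σ̄ on [k] and τ beyond) · μ(agrees with σ on [k])`. -/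
theorem stmt9 (n : ℕ) (p : Fin n → Fin n → ℝ) (hpos : ∀ i j : Fin n, 0 < p i j)
    (k : ℕ) (σ σb : Equiv.Perm (Fin n))
    (hσ : Disconnecting n σ k) (hσb : Disconnecting n σb k)
    (τ : Fin n → Fin n) :
    (∑ σ' ∈ Finset.univ.filter (fun σ' : Equiv.Perm (Fin n) =>
        (∀ t : Fin n, (t : ℕ) < k → σ' t = σ t) ∧
        (∀ t : Fin n, k ≤ (t : ℕ) → σ' t = τ t)), pairWeight n p σ') *
      (∑ σ' ∈ Finset.univ.filter (fun σ' : Equiv.Perm (Fin n) =>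
        ∀ t : Fin n, (t : ℕ) < k → σ' t = σb t), pairWeight n p σ')
    =
    (∑ σ' ∈ Finset.univ.filter (fun σ' : Equiv.Perm (Fin n) =>
        (∀ t : Fin n, (t : ℕ) < k → σ' t = σb t) ∧
        (∀ t : Fin n, k ≤ (t : ℕ) → σ' t = τ t)), pairWeight n p σ') *
      (∑ σ' ∈ Finset.univ.filter (fun σ' : Equiv.Perm (Fin n) =>
        ∀ t : Fin n, (t : ℕ) < k → σ' t = σ t), pairWeight n p σ') := by
  have hl := disc_lt_iff hσ
  have hlb := disc_lt_iff hσb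
  have key1 := key_sum1 p hl hlb τ
  have key2 := key_sum2 p hl hlb
  set A := ∏ x ∈ univ.filter (fun x : Fin n × Fin n => x.1 < x.2 ∧ (x.2 : ℕ) < k),
      p (σ x.1) (σ x.2) with hA
  set B := ∏ x ∈ univ.filter (fun x : Fin n × Fin n => x.1 < x.2 ∧ (x.2 : ℕ) < k),
      p (σb x.1) (σb x.2) with hB
  have hApos : 0 < A := Finset.prod_pos (fun x _ => hpos _ _)
  have hBpos : 0 < B := Finset.prod_pos (fun x _ => hpos _ _)
  apply mul_left_cancel₀ (mul_ne_zero hApos.ne' hBpos.ne')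
  set S1 := ∑ σ' ∈ Finset.univ.filter (fun σ' : Equiv.Perm (Fin n) =>
        (∀ t : Fin n, (t : ℕ) < k → σ' t = σ t) ∧
        (∀ t : Fin n, k ≤ (t : ℕ) → σ' t = τ t)), pairWeight n p σ'
  set S1b := ∑ σ' ∈ Finset.univ.filter (fun σ' : Equiv.Perm (Fin n) =>
        (∀ t : Fin n, (t : ℕ) < k → σ' t = σb t) ∧
        (∀ t : Fin n, k ≤ (t : ℕ) → σ' t = τ t)), pairWeight n p σ'
  set S2 := ∑ σ' ∈ Finset.univ.filter (fun σ' : Equiv.Perm (Fin n) =>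
        ∀ t : Fin n, (t : ℕ) < k → σ' t = σ t), pairWeight n p σ'
  set S2b := ∑ σ' ∈ Finset.univ.filter (fun σ' : Equiv.Perm (Fin n) =>
        ∀ t : Fin n, (t : ℕ) < k → σ' t = σb t), pairWeight n p σ'
  calc A * B * (S1 * S2b) = (B * S1) * (A * S2b) := by ring
    _ = (A * S1b) * (B * S2) := by rw [key1, ← key2]
    _ = A * B * (S1b * S2) := by ring
end

section
/- Let Y, Y' ∈ {0,1}^n each have exactly k ones, with Y ≤ Y' in the partial order where Y ≤ Y' iff ∑_{j≤r} Y(j) ≥ ∑_{j≤r} Y'(j) for all r ≤ n. Suppose Y_1, Y_1' are obtained from Y, Y' respectively by (possibly) swapping the coordinates at positions (i, i+1). If it is not the case that [(Y_1(i),Y_1(i+1)) = (0,1) and (Y_1'(i),Y_1'(i+1)) = (1,0) with both (Y(i),Y(i+1)) and (Y'(i),Y'(i+1)) in {(0,1),(1,0)}], then Y_1 ≤ Y_1'. -/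
open Finset

/-- `Y ≤ Y'` in the left-ordering: every prefix of `Y` contains at least as many
particles as the corresponding prefix of `Y'`. -/
def LeftOf (n : ℕ) (Y Y' : Fin n → ℕ) : Prop :=
  ∀ r : ℕ,
    ∑ j ∈ Finset.univ.filter (fun j : Fin n => (j : ℕ) < r), Y' j ≤
    ∑ j ∈ Finset.univ.filter (fun j : Fin n => (j : ℕ) < r), Y j

lemma swap_prefix_sum (n : ℕ) (Y : Fin n → ℕ) (i i' : Fin n)
    (hi : (i' : ℕ) = (i : ℕ) + 1) (r : ℕ) (hr : r ≠ (i : ℕ) + 1) :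
    ∑ j ∈ Finset.univ.filter (fun j : Fin n => (j : ℕ) < r), Y (Equiv.swap i i' j) =
    ∑ j ∈ Finset.univ.filter (fun j : Fin n => (j : ℕ) < r), Y j := by
  apply Finset.sum_equiv (Equiv.swap i i')
  · intro j
    simp only [mem_filter, mem_univ, true_and]
    rcases eq_or_ne j i with h | h
    · subst h; rw [Equiv.swap_apply_left]; omega
    · rcases eq_or_ne j i' with h2 | h2
      · subst h2; rw [Equiv.swap_apply_right]; omega
      · rw [Equiv.swap_apply_of_ne_of_ne h h2]
  · intro j _; rfl

/-- suppose `Y ≤ Y'` are `{0,1}`-configurations with `k` ones each,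
and `Y₁, Y₁'` are obtained by (possibly) swapping the coordinates at an edge
`(i, i+1)`.  Unless `(Y₁(i),Y₁(i+1)) = (0,1)` and `(Y₁'(i),Y₁'(i+1)) = (1,0)` with
both `(Y(i),Y(i+1))` and `(Y'(i),Y'(i+1))` in `{(0,1),(1,0)}`, one has `Y₁ ≤ Y₁'`. -/
theorem stmt10 (n k : ℕ) (Y Y' Y1 Y1' : Fin n → ℕ)
    (hY01 : ∀ v, Y v ≤ 1) (hY'01 : ∀ v, Y' v ≤ 1)
    (hcard : ∑ v, Y v = k) (hcard' : ∑ v, Y' v = k)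
    (hle : LeftOf n Y Y')
    (i i' : Fin n) (hi : (i' : ℕ) = (i : ℕ) + 1)
    (h1 : Y1 = Y ∨ Y1 = Y ∘ Equiv.swap i i')
    (h1' : Y1' = Y' ∨ Y1' = Y' ∘ Equiv.swap i i')
    (hex : ¬ (Y1 i = 0 ∧ Y1 i' = 1 ∧ Y1' i = 1 ∧ Y1' i' = 0 ∧
        ((Y i, Y i') = (0, 1) ∨ (Y i, Y i') = (1, 0)) ∧
        ((Y' i, Y' i') = (0, 1) ∨ (Y' i, Y' i') = (1, 0)))) :
    LeftOf n Y1 Y1' := by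
  have hii' : i ≠ i' := by
    intro h; rw [h] at hi; omega
  have hag : ∀ j : Fin n, j ≠ i → j ≠ i' → Y1 j = Y j := by
    intro j hj hj'
    rcases h1 with rfl | rfl
    · rfl
    · simp [Equiv.swap_apply_of_ne_of_ne hj hj']
  have hag' : ∀ j : Fin n, j ≠ i → j ≠ i' → Y1' j = Y' j := by
    intro j hj hj'
    rcases h1' with rfl | rfl
    · rfl
    · simp [Equiv.swap_apply_of_ne_of_ne hj hj']
  have hpair : (Y1 i = Y i ∧ Y1 i' = Y i') ∨ (Y1 i = Y i' ∧ Y1 i' = Y i) := by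
    rcases h1 with rfl | rfl
    · left; exact ⟨rfl, rfl⟩
    · right; simp
  have hpair' : (Y1' i = Y' i ∧ Y1' i' = Y' i') ∨ (Y1' i = Y' i' ∧ Y1' i' = Y' i) := by
    rcases h1' with rfl | rfl
    · left; exact ⟨rfl, rfl⟩
    · right; simp
  intro r
  by_cases hr : r = (i : ℕ) + 1
  · subst hr
    -- decompose prefix sets
    have hset1 : (Finset.univ.filter (fun j : Fin n => (j : ℕ) < (i : ℕ) + 1)) =
        insert i (Finset.univ.filter (fun j : Fin n => (j : ℕ) < (i : ℕ))) := by
      ext j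
      simp only [mem_filter, mem_univ, true_and, mem_insert, Fin.ext_iff]
      omega
    have hset2 : (Finset.univ.filter (fun j : Fin n => (j : ℕ) < (i : ℕ) + 2)) =
        insert i' (insert i (Finset.univ.filter (fun j : Fin n => (j : ℕ) < (i : ℕ)))) := by
      ext j
      simp only [mem_filter, mem_univ, true_and, mem_insert, Fin.ext_iff]
      omega
    have hinot : i ∉ (Finset.univ.filter (fun j : Fin n => (j : ℕ) < (i : ℕ))) := by
      simp
    have hinot' : i' ∉ insert i (Finset.univ.filter (fun j : Fin n => (j : ℕ) < (i : ℕ))) := by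
      simp only [mem_insert, mem_filter, mem_univ, true_and, Fin.ext_iff]
      omega
    have hbase : ∀ Z Z1 : Fin n → ℕ, (∀ j : Fin n, j ≠ i → j ≠ i' → Z1 j = Z j) →
        ∑ j ∈ Finset.univ.filter (fun j : Fin n => (j : ℕ) < (i : ℕ)), Z1 j =
        ∑ j ∈ Finset.univ.filter (fun j : Fin n => (j : ℕ) < (i : ℕ)), Z j := by
      intro Z Z1 h
      apply Finset.sum_congr rfl
      intro j hj
      simp only [mem_filter, mem_univ, true_and] at hj
      exact h j (by intro e; rw [e] at hj; omega) (by intro e; rw [e] at hj; omega)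
    have e1 : ∑ j ∈ Finset.univ.filter (fun j : Fin n => (j : ℕ) < (i : ℕ) + 1), Y1 j =
        Y1 i + ∑ j ∈ Finset.univ.filter (fun j : Fin n => (j : ℕ) < (i : ℕ)), Y j := by
      rw [hset1, Finset.sum_insert hinot, hbase Y Y1 hag]
    have e1' : ∑ j ∈ Finset.univ.filter (fun j : Fin n => (j : ℕ) < (i : ℕ) + 1), Y1' j =
        Y1' i + ∑ j ∈ Finset.univ.filter (fun j : Fin n => (j : ℕ) < (i : ℕ)), Y' j := by
      rw [hset1, Finset.sum_insert hinot, hbase Y' Y1' hag']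
    have h2 := hle ((i : ℕ) + 2)
    rw [hset2, Finset.sum_insert hinot', Finset.sum_insert hinot,
      Finset.sum_insert hinot', Finset.sum_insert hinot] at h2
    have h0 := hle (i : ℕ)
    rw [e1, e1']
    simp only [Prod.mk.injEq] at hex
    have b1 := hY01 i; have b2 := hY01 i'
    have b3 := hY'01 i; have b4 := hY'01 i'
    omega
  · have key : ∀ Z Z1 : Fin n → ℕ, Z1 = Z ∨ Z1 = Z ∘ Equiv.swap i i' →
        ∑ j ∈ Finset.univ.filter (fun j : Fin n => (j : ℕ) < r), Z1 j =
        ∑ j ∈ Finset.univ.filter (fun j : Fin n => (j : ℕ) < r), Z j := by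
      rintro Z Z1 (rfl | rfl)
      · rfl
      · exact swap_prefix_sum n Z i i' hi r hr
    rw [key Y Y1 h1, key Y' Y1' h1']
    exact hle r
end

section
/- Let Y be a geometric random variable with success probability a ∈ (0,1] (so E[Y] = 1/a and E[e^{tY}] = a e^t/(1 − e^t(1−a)) for small t). Then there is a universal constant K such that for all 0 < t < a/2, E[e^{t(Y − 1/a)}] ≤ exp(K t² (1−a)/a²). -/
set_option maxHeartbeats 1000000

private lemma exp_le_quad {t : ℝ} (h0 : 0 ≤ t) (h1 : t ≤ 1) :
    Real.exp t ≤ 1 + t + t ^ 2 := by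
  have hs : ∑ m ∈ Finset.range 3, t ^ m / (m.factorial : ℝ) = 1 + t + t ^ 2 / 2 := by
    simp [Finset.sum_range_succ]
  calc Real.exp t ≤ _ := Real.exp_bound' h0 h1 zero_lt_three
    _ ≤ 1 + t + t ^ 2 := by
      rw [hs]
      norm_num [Nat.factorial]
      nlinarith [mul_le_mul_of_nonneg_right h1 (sq_nonneg t), sq_nonneg t]

/-- sub-gamma MGF bound for a geometric random variable `Y` with
success probability `a ∈ (0,1]` supported on `{1,2,3,…}` (so
`P(Y = m+1) = a(1-a)^m` and `E[Y] = 1/a`): there is a universal constant `K` such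
that for all `0 < t < a/2`, `E[e^{t(Y − 1/a)}] ≤ exp(K t² (1−a)/a²)`. -/
theorem stmt15 :
    ∃ K : ℝ, 0 < K ∧
      ∀ a : ℝ, 0 < a → a ≤ 1 → ∀ t : ℝ, 0 < t → t < a / 2 →
        ∑' m : ℕ, a * (1 - a) ^ m * Real.exp (t * (((m : ℝ) + 1) - 1 / a)) ≤
          Real.exp (K * t ^ 2 * (1 - a) / a ^ 2) := by
  refine ⟨10, by norm_num, ?_⟩
  intro a ha ha1 t ht hta
  obtain ⟨q, hq_def⟩ : ∃ q : ℝ, q = 1 - a := ⟨_, rfl⟩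
  have hq0 : 0 ≤ q := by rw [hq_def]; linarith
  have hq1 : q ≤ 1 := by rw [hq_def]; linarith
  have hta2 : t < 1 / 2 := lt_of_lt_of_le hta (by linarith)
  have ht1 : t ≤ 1 := by linarith
  have hexp : Real.exp t ≤ 1 + t + t ^ 2 := exp_le_quad ht.le ht1
  have hexp32 : Real.exp t - 1 ≤ (3/2) * t := by nlinarith
  have hexp1 : (1:ℝ) ≤ Real.exp t := Real.one_le_exp ht.le
  obtain ⟨u, hu_def⟩ : ∃ u : ℝ, u = q * (Real.exp t - 1) / a := ⟨_, rfl⟩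
  have hu0 : 0 ≤ u := by
    rw [hu_def]
    exact div_nonneg (mul_nonneg hq0 (by linarith)) ha.le
  have hu34 : u ≤ 3 / 4 := by
    rw [hu_def, div_le_iff₀ ha]
    nlinarith
  obtain ⟨r, hr_def⟩ : ∃ r : ℝ, r = q * Real.exp t := ⟨_, rfl⟩
  have hr0 : 0 ≤ r := hr_def ▸ mul_nonneg hq0 (Real.exp_pos t).le
  have hru : 1 - r = a * (1 - u) := by
    rw [hr_def, hu_def, hq_def]
    field_simp
    ring
  have h1u : (0:ℝ) < 1 - u := by linarith
  have hr1 : r < 1 := by nlinarith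
  have hterm : ∀ m : ℕ, a * (1 - a) ^ m * Real.exp (t * (((m : ℝ) + 1) - 1 / a)) =
      (a * Real.exp (t * (1 - 1 / a))) * r ^ m := by
    intro m
    rw [hr_def, hq_def, mul_pow, ← Real.exp_nat_mul]
    rw [show t * (((m : ℝ) + 1) - 1 / a) = t * (1 - 1/a) + (m : ℝ) * t by ring,
      Real.exp_add]
    ring
  have hsum : ∑' m : ℕ, a * (1 - a) ^ m * Real.exp (t * (((m : ℝ) + 1) - 1 / a)) =
      (a * Real.exp (t * (1 - 1 / a))) * (1 - r)⁻¹ := by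
    simp_rw [hterm]
    rw [tsum_mul_left, tsum_geometric_of_lt_one hr0 hr1]
  rw [hsum, ← hq_def, hru]
  -- key inequality
  have key : Real.exp (t * (1 - 1 / a)) ≤ (1 - u) * Real.exp (10 * t ^ 2 * q / a ^ 2) := by
    have h1 : Real.exp (t * (1 - 1 / a) + (u + 4 * u ^ 2)) ≤
        Real.exp (10 * t ^ 2 * q / a ^ 2) := by
      apply Real.exp_le_exp.2
      have e1 : t * (1 - 1 / a) + u = q * (Real.exp t - 1 - t) / a := by
        rw [hu_def, hq_def]; field_simp; ring
      have e2 : q * (Real.exp t - 1 - t) / a ≤ t ^ 2 * q / a ^ 2 := by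
        rw [div_le_div_iff₀ ha (by positivity)]
        nlinarith [mul_nonneg hq0 (by nlinarith : (0:ℝ) ≤ t ^ 2 - (Real.exp t - 1 - t)),
          sq_nonneg a, mul_nonneg (mul_nonneg hq0 (sq_nonneg t))
            (mul_nonneg ha.le (by linarith : (0:ℝ) ≤ 1 - a))]
      have hu_le : u ≤ 3 / 2 * t * q / a := by
        rw [hu_def, div_le_div_iff₀ ha ha]
        nlinarith [mul_le_mul_of_nonneg_left hexp32 (mul_nonneg hq0 ha.le)]
      have h2 : u ^ 2 ≤ (3 / 2 * t * q / a) ^ 2 := pow_le_pow_left₀ hu0 hu_le 2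
      have h3 : (3 / 2 * t * q / a) ^ 2 = 9 / 4 * (t ^ 2 * q ^ 2 / a ^ 2) := by
        rw [div_pow]; ring
      have h4 : 9 * (t ^ 2 * q ^ 2 / a ^ 2) ≤ 9 * (t ^ 2 * q / a ^ 2) := by
        gcongr 9 * (t ^ 2 * ?_ / a ^ 2)
        nlinarith
      have e3 : 4 * u ^ 2 ≤ 9 * (t ^ 2 * q / a ^ 2) := by nlinarith
      have e4 : t ^ 2 * q / a ^ 2 + 9 * (t ^ 2 * q / a ^ 2) = 10 * t ^ 2 * q / a ^ 2 := by
        ring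
      linarith [e1, e2, e3]
    have h2 : Real.exp (-(u + 4 * u ^ 2)) ≤ 1 - u := by
      have hx : (1:ℝ) + (u + 4 * u ^ 2) ≤ Real.exp (u + 4 * u ^ 2) := by
        linarith [Real.add_one_le_exp (u + 4 * u ^ 2)]
      have hpos : (0:ℝ) < 1 + (u + 4 * u ^ 2) := by nlinarith
      have hinv : Real.exp (-(u + 4 * u ^ 2)) ≤ (1 + (u + 4 * u ^ 2))⁻¹ := by
        rw [Real.exp_neg]
        exact inv_anti₀ hpos hx
      refine hinv.trans ?_
      rw [inv_le_iff_one_le_mul₀ hpos]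
      nlinarith
    calc Real.exp (t * (1 - 1 / a))
        = Real.exp (-(u + 4 * u ^ 2)) * Real.exp (t * (1 - 1 / a) + (u + 4 * u ^ 2)) := by
          rw [← Real.exp_add]; ring_nf
      _ ≤ (1 - u) * Real.exp (10 * t ^ 2 * q / a ^ 2) :=
          mul_le_mul h2 h1 (Real.exp_pos _).le h1u.le
  have heq : a * Real.exp (t * (1 - 1 / a)) * (a * (1 - u))⁻¹ =
      Real.exp (t * (1 - 1 / a)) / (1 - u) := by
    field_simp
  rw [heq, div_le_iff₀ h1u]
  linarith [key]
end

section
/- Let μ on S_n be given by weights p and condition on the event that σ agrees with a fixed injective b on A^c = [i] ∪ [n−j+1, n]. Let r_b be the increasing bijection from [n−i−j] to [n] \ b(A^c), and define the relabeled permutation R_b σ ∈ S_{n−i−j} by R_b σ(x) = r_b^{-1}(σ(i+x)). Then the pushforward of μ(· | σ(A^c) = b) under R_b is the permutation measure on S_{n−i−j} with weights q_{k,k'} = p_{r_b(k), r_b(k')}. Moreover, if p satisfies ε-positive bias (p(a,b)/p(b,a) ≥ 1+ε for all a < b), then so does q. -/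
open Finset
open scoped Classical

/-- conditioning `μ` on agreeing with the injective assignment `b` on
`A^c = [i] ∪ [n−j+1, n]` and relabeling via the increasing bijection
`r_b : [n−i−j] → [n] \ b(A^c)` (i.e. `R_b σ (x) = r_b⁻¹(σ(i+x))`), the pushforward of
`μ(· | σ(A^c) = b)` under `R_b` is the permutation measure on `S_{n−i−j}` with
weights `q(k,k') = p(r_b(k), r_b(k'))` (stated in cross-multiplied form with
unnormalized weights, where `R_b σ = σ'` is expressed as `σ(i+x) = r_b(σ'(x))`).
Moreover, if `p` is ε-positively biased then so is `q`. -/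
theorem stmt18 (n i j : ℕ) (hij : i + j ≤ n) (ε : ℝ) (hε : 0 < ε)
    (p : Fin n → Fin n → ℝ) (hpos : ∀ a c : Fin n, 0 < p a c)
    (Ac : Finset (Fin n))
    (hAc : Ac = Finset.univ.filter (fun x : Fin n => (x : ℕ) < i ∨ n - j ≤ (x : ℕ)))
    (b : Fin n → Fin n) (hbinj : Set.InjOn b (Ac : Set (Fin n)))
    (r : Fin (n - i - j) → Fin n) (hmono : StrictMono r)
    (hrange : Set.range r = (↑(Ac.image b) : Set (Fin n))ᶜ)
    (q : Fin (n - i - j) → Fin (n - i - j) → ℝ)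
    (hqdef : ∀ a c : Fin (n - i - j), q a c = p (r a) (r c)) :
    (∀ σ' : Equiv.Perm (Fin (n - i - j)),
      (∑ σ ∈ Finset.univ.filter (fun σ : Equiv.Perm (Fin n) =>
          (∀ x ∈ Ac, σ x = b x) ∧
          ∀ x : Fin (n - i - j),
            σ ⟨i + (x : ℕ), by have := x.isLt; omega⟩ = r (σ' x)),
        pairWeight n p σ) *
        (∑ τ' : Equiv.Perm (Fin (n - i - j)), pairWeight (n - i - j) q τ')
      = pairWeight (n - i - j) q σ' *
        (∑ σ ∈ Finset.univ.filter (fun σ : Equiv.Perm (Fin n) => ∀ x ∈ Ac, σ x = b x),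
          pairWeight n p σ)) ∧
    ((∀ a c : Fin n, a < c → 1 + ε ≤ p a c / p c a) →
      ∀ a c : Fin (n - i - j), a < c → 1 + ε ≤ q a c / q c a) := by
  classical
  have hmem : ∀ x : Fin n, x ∈ Ac ↔ (x : ℕ) < i ∨ n - j ≤ (x : ℕ) := by
    intro x; simp [hAc]
  have hnotmem : ∀ x : Fin n, x ∉ Ac ↔ i ≤ (x : ℕ) ∧ (x : ℕ) < n - j := by
    intro x; rw [hmem]; omega
  have hlt : ∀ z : Fin (n - i - j), i + (z : ℕ) < n := fun z => by have := z.isLt; omega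
  set e : Fin (n - i - j) → Fin n := fun z => ⟨i + z, hlt z⟩ with he
  have heAc : ∀ z : Fin (n - i - j), e z ∉ Ac := by
    intro z; rw [hnotmem]
    have := z.isLt
    constructor <;> simp [he] <;> omega
  have hrAc : ∀ z : Fin (n - i - j), r z ∉ Ac.image b := by
    intro z
    have h1 : r z ∈ Set.range r := ⟨z, rfl⟩
    rw [hrange] at h1
    simpa using h1
  have hsub : ∀ x : Fin n, x ∉ Ac → (x : ℕ) - i < n - i - j := by
    intro x hx; rw [hnotmem] at hx; omega
  set f : Equiv.Perm (Fin (n - i - j)) → Fin n → Fin n := fun σ' x =>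
    if h : x ∈ Ac then b x else r (σ' ⟨(x : ℕ) - i, hsub x h⟩) with hf
  have hfinj : ∀ σ', Function.Injective (f σ') := by
    intro σ' x y hxy
    by_cases hx : x ∈ Ac <;> by_cases hy : y ∈ Ac
    · simp only [hf, dif_pos hx, dif_pos hy] at hxy
      exact hbinj hx hy hxy
    · simp only [hf, dif_pos hx, dif_neg hy] at hxy
      exact absurd (hxy ▸ Finset.mem_image_of_mem b hx) (hrAc _)
    · simp only [hf, dif_neg hx, dif_pos hy] at hxy
      exact absurd (hxy.symm ▸ Finset.mem_image_of_mem b hy) (hrAc _)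
    · simp only [hf, dif_neg hx, dif_neg hy] at hxy
      have h2 := σ'.injective (hmono.injective hxy)
      have h3 : (x : ℕ) - i = (y : ℕ) - i := congrArg Fin.val h2
      have hx' := (hnotmem x).mp hx
      have hy' := (hnotmem y).mp hy
      exact Fin.ext (by omega)
  set F : Equiv.Perm (Fin (n - i - j)) → Equiv.Perm (Fin n) := fun σ' =>
    Equiv.ofBijective (f σ') (Finite.injective_iff_bijective.mp (hfinj σ')) with hF
  have hFapply : ∀ σ' x, F σ' x = f σ' x := fun _ _ => rfl
  constructor
  · intro σ'
    -- the inner filter set is a singleton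
    have hA : (Finset.univ.filter (fun σ : Equiv.Perm (Fin n) =>
        (∀ x ∈ Ac, σ x = b x) ∧
        ∀ x : Fin (n - i - j), σ ⟨i + (x : ℕ), hlt x⟩ = r (σ' x))) = {F σ'} := by
      ext σ
      simp only [Finset.mem_filter, Finset.mem_univ, true_and, Finset.mem_singleton]
      constructor
      · rintro ⟨h1, h2⟩
        refine Equiv.ext fun x => ?_
        rw [hFapply]
        by_cases hx : x ∈ Ac
        · rw [h1 x hx]; simp only [hf, dif_pos hx]
        · simp only [hf, dif_neg hx]
          have hxi := (hnotmem x).mp hx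
          have hx2 : x = (⟨i + ((⟨(x : ℕ) - i, hsub x hx⟩ : Fin (n - i - j)) : ℕ),
              hlt ⟨(x : ℕ) - i, hsub x hx⟩⟩ : Fin n) := Fin.ext (by simp; omega)
          conv_lhs => rw [hx2]
          exact h2 ⟨(x : ℕ) - i, hsub x hx⟩
      · rintro rfl
        refine ⟨fun x hx => by rw [hFapply]; simp only [hf, dif_pos hx], fun z => ?_⟩
        rw [hFapply]
        simp only [hf, dif_neg (heAc z)]
        congr 2
        exact Fin.ext (by have hz : (⟨i + (z : ℕ), hlt z⟩ : Fin n) ∉ Ac := heAc z; simp [hz])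
    rw [hA, Finset.sum_singleton]
    -- the outer sum is a sum over the image of F
    have hB : (∑ σ ∈ Finset.univ.filter (fun σ : Equiv.Perm (Fin n) => ∀ x ∈ Ac, σ x = b x),
        pairWeight n p σ) = ∑ τ' : Equiv.Perm (Fin (n - i - j)), pairWeight n p (F τ') := by
      rw [eq_comm]
      refine Finset.sum_bij (fun τ' _ => F τ') ?_ ?_ ?_ ?_
      · intro τ' _
        simp only [Finset.mem_filter, Finset.mem_univ, true_and]
        intro x hx; rw [hFapply]; simp only [hf, dif_pos hx]
      · intro τ' _ ρ' _ hFe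
        have hFe' : F τ' = F ρ' := hFe
        refine Equiv.ext fun z => ?_
        have h1 : F τ' (e z) = F ρ' (e z) := by rw [hFe']
        rw [hFapply, hFapply] at h1
        simp only [hf, dif_neg (heAc z)] at h1
        have h3 := hmono.injective h1
        have h4 : (⟨((e z : Fin n) : ℕ) - i, hsub _ (heAc z)⟩ : Fin (n - i - j)) = z :=
          Fin.ext (by simp [he])
        rw [h4] at h3
        exact h3
      · intro σ hσ
        simp only [Finset.mem_filter, Finset.mem_univ, true_and] at hσ
        have hgz : ∀ z : Fin (n - i - j), ∃ w : Fin (n - i - j), r w = σ (e z) := by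
          intro z
          have h1 : σ (e z) ∈ Set.range r := by
            rw [hrange]
            intro hc
            simp only [Finset.coe_image, Set.mem_image, Finset.mem_coe] at hc
            obtain ⟨a, ha, hab⟩ := hc
            have : σ (e z) = σ a := by rw [hσ a ha, hab]
            exact heAc z (σ.injective this ▸ ha)
          exact h1
        choose g hg using hgz
        have hginj : Function.Injective g := by
          intro z w hzw
          have h1 : σ (e z) = σ (e w) := by rw [← hg z, ← hg w, hzw]
          have h2 := σ.injective h1
          have h3 : (e z : ℕ) = (e w : ℕ) := congrArg Fin.val h2
          simp only [he] at h3
          exact Fin.ext (by omega)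
        refine ⟨Equiv.ofBijective g (Finite.injective_iff_bijective.mp hginj),
          Finset.mem_univ _, ?_⟩
        refine Equiv.ext fun x => ?_
        rw [hFapply]
        by_cases hx : x ∈ Ac
        · simp only [hf, dif_pos hx]; exact (hσ x hx).symm
        · simp only [hf, dif_neg hx]
          have hxi := (hnotmem x).mp hx
          have : (Equiv.ofBijective g (Finite.injective_iff_bijective.mp hginj))
              ⟨(x : ℕ) - i, hsub x hx⟩ = g ⟨(x : ℕ) - i, hsub x hx⟩ := rfl
          rw [this, hg]
          congr 1
          exact Fin.ext (by simp [he]; omega)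
      · intro τ' _; rfl
    rw [hB]
    -- key product identity
    set P : Finset (Fin n × Fin n) := Finset.univ.filter (fun x : Fin n × Fin n => x.1 < x.2)
      with hP
    set T1 : ℝ := ∏ x ∈ (P.filter (fun x => x.1 ∈ Ac)).filter (fun x => x.2 ∈ Ac),
      p (b x.1) (b x.2) with hT1
    set T2 : ℝ := ∏ a ∈ Finset.univ.filter (fun a : Fin n => (a : ℕ) < i),
      ∏ z : Fin (n - i - j), p (b a) (r z) with hT2
    set T3 : ℝ := ∏ a ∈ Finset.univ.filter (fun a : Fin n => n - j ≤ (a : ℕ)),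
      ∏ z : Fin (n - i - j), p (r z) (b a) with hT3
    have hkey : ∀ τ' : Equiv.Perm (Fin (n - i - j)),
        pairWeight n p (F τ') = (T1 * T2 * T3) * pairWeight (n - i - j) q τ' := by
      intro τ'
      have hsplit : pairWeight n p (F τ') =
          (∏ x ∈ (P.filter (fun x => x.1 ∈ Ac)).filter (fun x => x.2 ∈ Ac),
            p (F τ' x.1) (F τ' x.2)) *
          (∏ x ∈ (P.filter (fun x => x.1 ∈ Ac)).filter (fun x => ¬ x.2 ∈ Ac),
            p (F τ' x.1) (F τ' x.2)) *
          ((∏ x ∈ (P.filter (fun x => ¬ x.1 ∈ Ac)).filter (fun x => x.2 ∈ Ac),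
            p (F τ' x.1) (F τ' x.2)) *
          (∏ x ∈ (P.filter (fun x => ¬ x.1 ∈ Ac)).filter (fun x => ¬ x.2 ∈ Ac),
            p (F τ' x.1) (F τ' x.2))) := by
        rw [pairWeight, ← hP,
          ← Finset.prod_filter_mul_prod_filter_not P (fun x => x.1 ∈ Ac),
          ← Finset.prod_filter_mul_prod_filter_not (P.filter (fun x => x.1 ∈ Ac))
            (fun x => x.2 ∈ Ac),
          ← Finset.prod_filter_mul_prod_filter_not (P.filter (fun x => ¬ x.1 ∈ Ac))
            (fun x => x.2 ∈ Ac)]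
      have hQ1 : (∏ x ∈ (P.filter (fun x => x.1 ∈ Ac)).filter (fun x => x.2 ∈ Ac),
          p (F τ' x.1) (F τ' x.2)) = T1 := by
        refine Finset.prod_congr rfl ?_
        intro x hx
        simp only [Finset.mem_filter] at hx
        rw [hFapply, hFapply]
        simp only [hf, dif_pos hx.2, dif_pos hx.1.2]
      have hQ2 : (∏ x ∈ (P.filter (fun x => x.1 ∈ Ac)).filter (fun x => ¬ x.2 ∈ Ac),
          p (F τ' x.1) (F τ' x.2)) = T2 := by
        rw [eq_comm, hT2]
        have step1 : (∏ a ∈ Finset.univ.filter (fun a : Fin n => (a : ℕ) < i),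
            ∏ z : Fin (n - i - j), p (b a) (r z)) =
            ∏ x ∈ (Finset.univ.filter (fun a : Fin n => (a : ℕ) < i)) ×ˢ
              (Finset.univ : Finset (Fin (n - i - j))), p (b x.1) (r (τ' x.2)) := by
          rw [Finset.prod_product' (f := fun a z => p (b a) (r (τ' z)))]
          refine Finset.prod_congr rfl fun a _ => ?_
          exact (Equiv.prod_comp τ' (fun z => p (b a) (r z))).symm
        rw [step1]
        refine Finset.prod_bij (fun x _ => (x.1, e x.2)) ?_ ?_ ?_ ?_
        · intro x hx
          simp only [Finset.mem_product, Finset.mem_filter, Finset.mem_univ, true_and,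
            and_true] at hx
          refine Finset.mem_filter.mpr ⟨Finset.mem_filter.mpr ⟨?_,
            (hmem x.1).mpr (Or.inl hx)⟩, heAc x.2⟩
          rw [hP, Finset.mem_filter]
          refine ⟨Finset.mem_univ _, Fin.lt_def.mpr ?_⟩
          show (x.1 : ℕ) < i + (x.2 : ℕ)
          omega
        · intro x hx y hy hxy
          have hxy' : (x.1, e x.2) = (y.1, e y.2) := hxy
          have h1 : x.1 = y.1 := (Prod.ext_iff.mp hxy').1
          have h2 : e x.2 = e y.2 := (Prod.ext_iff.mp hxy').2
          have h3 : i + (x.2 : ℕ) = i + (y.2 : ℕ) := congrArg Fin.val h2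
          exact Prod.ext h1 (Fin.ext (by omega))
        · intro x hx
          simp only [Finset.mem_filter] at hx
          obtain ⟨⟨hxP, hx1⟩, hx2⟩ := hx
          have hx1' := (hmem x.1).mp hx1
          have hx2' := (hnotmem x.2).mp hx2
          have hlt12 : (x.1 : ℕ) < (x.2 : ℕ) := by
            rw [hP, Finset.mem_filter] at hxP
            exact Fin.lt_def.mp hxP.2
          have hx1i : (x.1 : ℕ) < i := by omega
          refine ⟨(x.1, ⟨(x.2 : ℕ) - i, hsub x.2 hx2⟩), ?_, ?_⟩
          · simp only [Finset.mem_product, Finset.mem_filter, Finset.mem_univ, true_and,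
              and_true]
            exact hx1i
          · refine Prod.ext rfl (Fin.ext ?_)
            show i + ((x.2 : ℕ) - i) = (x.2 : ℕ)
            omega
        · intro x hx
          simp only [Finset.mem_product, Finset.mem_filter, Finset.mem_univ, true_and,
            and_true] at hx
          rw [hFapply, hFapply]
          have hx1Ac : x.1 ∈ Ac := (hmem x.1).mpr (Or.inl hx)
          simp only [hf, dif_pos hx1Ac, dif_neg (heAc x.2)]
          congr 2
          exact Fin.ext (by simp [he])
      have hQ3 : (∏ x ∈ (P.filter (fun x => ¬ x.1 ∈ Ac)).filter (fun x => x.2 ∈ Ac),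
          p (F τ' x.1) (F τ' x.2)) = T3 := by
        rw [eq_comm, hT3]
        have step1 : (∏ a ∈ Finset.univ.filter (fun a : Fin n => n - j ≤ (a : ℕ)),
            ∏ z : Fin (n - i - j), p (r z) (b a)) =
            ∏ x ∈ (Finset.univ.filter (fun a : Fin n => n - j ≤ (a : ℕ))) ×ˢ
              (Finset.univ : Finset (Fin (n - i - j))), p (r (τ' x.2)) (b x.1) := by
          rw [Finset.prod_product' (f := fun a z => p (r (τ' z)) (b a))]
          refine Finset.prod_congr rfl fun a _ => ?_
          exact (Equiv.prod_comp τ' (fun z => p (r z) (b a))).symm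
        rw [step1]
        refine Finset.prod_bij (fun x _ => (e x.2, x.1)) ?_ ?_ ?_ ?_
        · intro x hx
          simp only [Finset.mem_product, Finset.mem_filter, Finset.mem_univ, true_and,
            and_true] at hx
          refine Finset.mem_filter.mpr ⟨Finset.mem_filter.mpr ⟨?_, heAc x.2⟩,
            (hmem x.1).mpr (Or.inr hx)⟩
          rw [hP, Finset.mem_filter]
          refine ⟨Finset.mem_univ _, Fin.lt_def.mpr ?_⟩
          show i + (x.2 : ℕ) < (x.1 : ℕ)
          have h2 := x.2.isLt
          omega
        · intro x hx y hy hxy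
          have hxy' : (e x.2, x.1) = (e y.2, y.1) := hxy
          have h1 : x.1 = y.1 := (Prod.ext_iff.mp hxy').2
          have h2 : e x.2 = e y.2 := (Prod.ext_iff.mp hxy').1
          have h3 : i + (x.2 : ℕ) = i + (y.2 : ℕ) := congrArg Fin.val h2
          exact Prod.ext h1 (Fin.ext (by omega))
        · intro x hx
          simp only [Finset.mem_filter] at hx
          obtain ⟨⟨hxP, hx1⟩, hx2⟩ := hx
          have hx1' := (hnotmem x.1).mp hx1
          have hx2' := (hmem x.2).mp hx2
          have hlt12 : (x.1 : ℕ) < (x.2 : ℕ) := by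
            rw [hP, Finset.mem_filter] at hxP
            exact Fin.lt_def.mp hxP.2
          have hx2j : n - j ≤ (x.2 : ℕ) := by omega
          refine ⟨(x.2, ⟨(x.1 : ℕ) - i, hsub x.1 hx1⟩), ?_, ?_⟩
          · simp only [Finset.mem_product, Finset.mem_filter, Finset.mem_univ, true_and,
              and_true]
            exact hx2j
          · refine Prod.ext (Fin.ext ?_) rfl
            show i + ((x.1 : ℕ) - i) = (x.1 : ℕ)
            omega
        · intro x hx
          simp only [Finset.mem_product, Finset.mem_filter, Finset.mem_univ, true_and,
            and_true] at hx
          rw [hFapply, hFapply]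
          have hx1Ac : x.1 ∈ Ac := (hmem x.1).mpr (Or.inr hx)
          simp only [hf, dif_pos hx1Ac, dif_neg (heAc x.2)]
          congr 3
          exact Fin.ext (by simp [he])
      have hQ4 : (∏ x ∈ (P.filter (fun x => ¬ x.1 ∈ Ac)).filter (fun x => ¬ x.2 ∈ Ac),
          p (F τ' x.1) (F τ' x.2)) = pairWeight (n - i - j) q τ' := by
        rw [eq_comm, pairWeight]
        refine Finset.prod_bij (fun z _ => (e z.1, e z.2)) ?_ ?_ ?_ ?_
        · intro z hz
          simp only [Finset.mem_filter, Finset.mem_univ, true_and] at hz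
          refine Finset.mem_filter.mpr ⟨Finset.mem_filter.mpr ⟨?_, heAc z.1⟩, heAc z.2⟩
          rw [hP, Finset.mem_filter]
          refine ⟨Finset.mem_univ _, Fin.lt_def.mpr ?_⟩
          show i + (z.1 : ℕ) < i + (z.2 : ℕ)
          have hz' : (z.1 : ℕ) < (z.2 : ℕ) := Fin.lt_def.mp hz
          omega
        · intro x hx y hy hxy
          have hxy' : (e x.1, e x.2) = (e y.1, e y.2) := hxy
          have h1 : e x.1 = e y.1 := (Prod.ext_iff.mp hxy').1
          have h2 : e x.2 = e y.2 := (Prod.ext_iff.mp hxy').2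
          have h3 : i + (x.1 : ℕ) = i + (y.1 : ℕ) := congrArg Fin.val h1
          have h4 : i + (x.2 : ℕ) = i + (y.2 : ℕ) := congrArg Fin.val h2
          exact Prod.ext (Fin.ext (by omega)) (Fin.ext (by omega))
        · intro x hx
          simp only [Finset.mem_filter] at hx
          obtain ⟨⟨hxP, hx1⟩, hx2⟩ := hx
          have hx1' := (hnotmem x.1).mp hx1
          have hx2' := (hnotmem x.2).mp hx2
          have hlt12 : (x.1 : ℕ) < (x.2 : ℕ) := by
            rw [hP, Finset.mem_filter] at hxP
            exact Fin.lt_def.mp hxP.2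
          refine ⟨(⟨(x.1 : ℕ) - i, hsub x.1 hx1⟩, ⟨(x.2 : ℕ) - i, hsub x.2 hx2⟩), ?_, ?_⟩
          · simp only [Finset.mem_filter, Finset.mem_univ, true_and]
            show ((x.1 : ℕ) - i) < ((x.2 : ℕ) - i)
            omega
          · refine Prod.ext (Fin.ext ?_) (Fin.ext ?_)
            · show i + ((x.1 : ℕ) - i) = (x.1 : ℕ); omega
            · show i + ((x.2 : ℕ) - i) = (x.2 : ℕ); omega
        · intro z hz
          rw [hFapply, hFapply]
          simp only [hf, dif_neg (heAc z.1), dif_neg (heAc z.2), hqdef]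
          congr 3 <;> exact Fin.ext (by simp [he])
      rw [hsplit, hQ1, hQ2, hQ3, hQ4]
      ring
    simp only [hkey]
    rw [← Finset.mul_sum]
    ring
  · intro hp a c hac
    rw [hqdef, hqdef]
    exact hp _ _ (hmono hac)
end
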